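/- arXiv:nlin/0209019 — 9 statements merged into one kernel-verified Lean document; each statement's English description precedes it below -/
import Mathlib

section
/- With the notation of the local evolution map, the following three invariance relations hold identically: w₁′·w₂′ = w₁·w₂, u₂′·u₃′ = u₂·u₃, and u₁′·w₃ = u₁·w₃′ (equivalently u₁′/w₃′ = u₁/w₃). -/
/-- With the notation of the local evolution map
(`u₁' = κ₂u₁u₂w₂/D₁`, `w₁' = D₃/w₃`, `u₂' = u₁u₂u₃/D₂`, `w₂' = w₁w₂w₃/D₃`,
`u₃' = D₂/u₁`, `w₃' = κ₂u₂w₂w₃/D₁`), the invariance relations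
`w₁'·w₂' = w₁·w₂`, `u₂'·u₃' = u₂·u₃` and `u₁'·w₃ = u₁·w₃'` hold. -/
theorem statement0
    (u₁ w₁ u₂ w₂ u₃ w₃ κ₁ κ₂ κ₃ D₁ D₂ D₃ u₁' w₁' u₂' w₂' u₃' w₃' : ℂ)
    (hu₁ : u₁ ≠ 0) (hw₁ : w₁ ≠ 0) (hu₂ : u₂ ≠ 0) (hw₂ : w₂ ≠ 0)
    (hu₃ : u₃ ≠ 0) (hw₃ : w₃ ≠ 0)
    (hκ₁ : κ₁ ≠ 0) (hκ₂ : κ₂ ≠ 0) (hκ₃ : κ₃ ≠ 0)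
    (hD₁def : D₁ = κ₁ * u₁ * w₂ + κ₃ * u₂ * w₃ + κ₁ * κ₃ * u₁ * w₃)
    (hD₂def : D₂ = u₂ * u₃ + u₂ * w₁ + κ₁ * u₁ * w₁)
    (hD₃def : D₃ = w₁ * w₂ + u₃ * w₂ + κ₃ * u₃ * w₃)
    (hD₁ : D₁ ≠ 0) (hD₂ : D₂ ≠ 0) (hD₃ : D₃ ≠ 0)
    (hu₁' : u₁' = κ₂ * u₁ * u₂ * w₂ / D₁)
    (hw₁' : w₁' = D₃ / w₃)
    (hu₂' : u₂' = u₁ * u₂ * u₃ / D₂)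
    (hw₂' : w₂' = w₁ * w₂ * w₃ / D₃)
    (hu₃' : u₃' = D₂ / u₁)
    (hw₃' : w₃' = κ₂ * u₂ * w₂ * w₃ / D₁) :
    w₁' * w₂' = w₁ * w₂ ∧ u₂' * u₃' = u₂ * u₃ ∧ u₁' * w₃ = u₁ * w₃' := by
  subst hu₁' hw₁' hu₂' hw₂' hu₃' hw₃'
  refine ⟨?_, ?_, ?_⟩ <;> field_simp <;> ring
end

section
/- For each lattice point n ∈ ℤ³ at which D₁(n), D₂(n), D₃(n) are nonzero, the six equations of motion at n hold if and only if the three trilinear equations at n hold for all three cyclic permutations (α,β,γ) ∈ {(1,2,3), (2,3,1), (3,1,2)}. In other words, the Legendre substitution transforms the discrete equations of motion into the trilinear (generalized Hirota) system. -/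
/-!
At a fixed lattice point everything is field algebra. Under the Legendre substitution the
products `u₂ u₃`, `w₁ w₂` and the ratio `u₁ / w₃` are unchanged when each factor is shifted
in its own direction (`u₂ u₃ = u₂(n+e₂) u₃(n+e₃)`, `w₁ w₂ = w₁(n+e₁) w₂(n+e₂)`,
`u₁(n+e₁) w₃ = u₁ w₃(n+e₃)`), because the τ's telescope. Hence in each of the three pairs of
equations of motion sharing a denominator `D_α`, one equation implies the other, and the pair
reduces to a single bilinear relation, e.g. `D₂ = u₁ u₃(n+e₃)`. Multiplied by a nonzero monomial
in the τ's and pre-exponents, that relation is a trilinear equation.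
-/

section

variable {K : Type*} [Field K]

theorem eq_div_and_eq_div_iff_of_eq_mul {x y z D m : K} (hx : x ≠ 0) (hz : z ≠ 0)
    (hD : D ≠ 0) (hm : m = x * z * y) : (y = D / x ∧ z = m / D) ↔ D = x * y := by
  have hcancel : z * D = x * z * y ↔ D = x * y := by
    rw [mul_comm x z, mul_assoc, mul_right_inj' hz]
  rw [eq_div_iff hx, eq_div_iff hD, hm, hcancel, mul_comm y x, eq_comm, and_self]

theorem eq_div_and_eq_div_iff_of_mul_eq_mul {y y' D m m' : K} (hy : y ≠ 0) (hD : D ≠ 0)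
    (h : y * m' = y' * m) : (y = m / D ∧ y' = m' / D) ↔ y * D = m := by
  rw [eq_div_iff hD, eq_div_iff hD]
  refine ⟨And.left, fun hm => ⟨hm, mul_left_cancel₀ hy ?_⟩⟩
  rw [h, ← hm]; ring



/- In the three lemmas below `A`, `B`, `C` stand for `τ₁`, `τ₂`, `τ₃` at `n`, a subscript `i`
marks the shift by `eᵢ`, and a prime marks the shift of a dynamical variable in the direction of
its own equation of motion; `a, b, c, d, e, f` are the pre-exponents `u₁⁰, w₁⁰, u₂⁰, w₂⁰, u₃⁰, w₃⁰`.
-/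
theorem motion_iff_trilinear_123
    {a b k₁ c e A A₂ A₃ A₂₃ B B₃ C C₂ u₁ w₁ u₂ u₃ u₂' u₃' D r s₂ s₃ : K}
    (ha : a ≠ 0) (hb : b ≠ 0) (hc : c ≠ 0) (hA : A ≠ 0) (hA₂ : A₂ ≠ 0) (hA₃ : A₃ ≠ 0)
    (hA₂₃ : A₂₃ ≠ 0) (hB : B ≠ 0) (hB₃ : B₃ ≠ 0) (hC : C ≠ 0) (hD : D ≠ 0)
    (hu₁ : u₁ = a * B / B₃) (hw₁ : w₁ = b * C₂ / C) (hu₂ : u₂ = c * A / A₃)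
    (hu₃ : u₃ = e * A₂ / A) (hu₂' : u₂' = c * A₂ / A₂₃) (hu₃' : u₃' = e * A₂₃ / A₃)
    (hD₂ : D = u₂ * u₃ + u₂ * w₁ + k₁ * u₁ * w₁)
    (hr : r = a * e / (b * c)) (hs₂ : s₂ = e / b) (hs₃ : s₃ = c / (k₁ * a)) :
    (u₂' = u₁ * u₂ * u₃ / D ∧ u₃' = D / u₁) ↔
      r * A₂₃ * B * C = A * B₃ * C₂ + s₂ * A₂ * B₃ * C + s₃⁻¹ * A₃ * B * C₂ := by
  have hu₁0 : u₁ ≠ 0 := by rw [hu₁]; positivity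
  rw [and_comm, eq_div_and_eq_div_iff_of_eq_mul hu₁0 (by rw [hu₂']; positivity) hD
    (by rw [hu₁, hu₂, hu₃, hu₂', hu₃']; field_simp)]
  subst hD₂ hu₁ hw₁ hu₂ hu₃ hu₃' hr hs₂ hs₃
  rw [inv_div]
  field_simp
  constructor <;> intro h <;> linear_combination -h

theorem motion_iff_trilinear_231
    {a k₁ c d k₂ k₃ f A A₃ B B₁ B₃ B₁₃ C C₁ u₁ u₂ w₂ w₃ u₁' w₃' D r s₁ s₃ : K}
    (ha : a ≠ 0) (hk₁ : k₁ ≠ 0) (hk₃ : k₃ ≠ 0) (hf : f ≠ 0)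
    (hA₃ : A₃ ≠ 0) (hB : B ≠ 0) (hB₁ : B₁ ≠ 0) (hB₃ : B₃ ≠ 0) (hB₁₃ : B₁₃ ≠ 0) (hC₁ : C₁ ≠ 0)
    (hD : D ≠ 0)
    (hu₁ : u₁ = a * B / B₃) (hu₂ : u₂ = c * A / A₃) (hw₂ : w₂ = d * C / C₁)
    (hw₃ : w₃ = f * B / B₁) (hu₁' : u₁' = a * B₁ / B₁₃) (hw₃' : w₃' = f * B₃ / B₁₃)
    (hD₁ : D = k₁ * u₁ * w₂ + k₃ * u₂ * w₃ + k₁ * k₃ * u₁ * w₃)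
    (hr : r = k₂ * c * d / (k₁ * k₃ * a * f)) (hs₁ : s₁ = k₃ * f / d) (hs₃ : s₃ = c / (k₁ * a)) :
    (u₁' = k₂ * u₁ * u₂ * w₂ / D ∧ w₃' = k₂ * u₂ * w₂ * w₃ / D) ↔
      r * B₁₃ * C * A = B * C₁ * A₃ + s₃ * B₃ * C₁ * A + s₁⁻¹ * B₁ * C * A₃ := by
  have hu₁'w₃ : u₁' * w₃ = w₃' * u₁ := by
    rw [hu₁', hw₃, hw₃', hu₁]; field_simp
  rw [eq_div_and_eq_div_iff_of_mul_eq_mul (by rw [hu₁']; positivity) hD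
    (by linear_combination k₂ * u₂ * w₂ * hu₁'w₃)]
  subst hD₁ hu₁ hu₂ hw₂ hw₃ hu₁' hr hs₁ hs₃
  rw [inv_div]
  field_simp
  constructor <;> intro h <;> linear_combination -h

theorem motion_iff_trilinear_312
    {b d e f k₃ A A₂ B B₁ C C₁ C₂ C₁₂ w₁ w₂ u₃ w₃ w₁' w₂' D r s₁ s₂ : K}
    (hd : d ≠ 0) (he : e ≠ 0) (hf : f ≠ 0)
    (hA : A ≠ 0) (hB : B ≠ 0) (hB₁ : B₁ ≠ 0) (hC : C ≠ 0) (hC₁ : C₁ ≠ 0) (hC₂ : C₂ ≠ 0)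
    (hC₁₂ : C₁₂ ≠ 0) (hD : D ≠ 0)
    (hw₁ : w₁ = b * C₂ / C) (hw₂ : w₂ = d * C / C₁) (hu₃ : u₃ = e * A₂ / A)
    (hw₃ : w₃ = f * B / B₁) (hw₁' : w₁' = b * C₁₂ / C₁) (hw₂' : w₂' = d * C₂ / C₁₂)
    (hD₃ : D = w₁ * w₂ + u₃ * w₂ + k₃ * u₃ * w₃)
    (hr : r = b * f / (d * e)) (hs₁ : s₁ = k₃ * f / d) (hs₂ : s₂ = e / b) :
    (w₁' = D / w₃ ∧ w₂' = w₁ * w₂ * w₃ / D) ↔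
      r * C₁₂ * A * B = C * A₂ * B₁ + s₁ * C₁ * A₂ * B + s₂⁻¹ * C₂ * A * B₁ := by
  rw [eq_div_and_eq_div_iff_of_eq_mul (by rw [hw₃]; positivity) (by rw [hw₂']; positivity) hD
    (by rw [hw₁, hw₂, hw₃, hw₁', hw₂']; field_simp)]
  subst hD₃ hw₁ hw₂ hu₃ hw₃ hw₁' hr hs₁ hs₂
  rw [inv_div]
  field_simp
  constructor <;> intro h <;> linear_combination -h

end

/-- Under the Legendre substitution expressing the dynamical
variables `u_α, w_α` through the triplet of tau functions `τ₁, τ₂, τ₃` and the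
pre-exponents, at every lattice point `n = (n₁,n₂,n₃)` where `D₁, D₂, D₃` are
nonzero, the six discrete equations of motion hold if and only if the three
trilinear (generalized Hirota) equations hold for the three cyclic
permutations of `(1,2,3)`. -/
theorem statement2
    (τ₁ τ₂ τ₃ : ℤ → ℤ → ℤ → ℂ)
    (u₁0 w₁0 κ₁ u₂0 w₂0 κ₂ u₃0 w₃0 κ₃ : ℤ → ℤ → ℂ)
    (hτ : ∀ n₁ n₂ n₃ : ℤ,
      τ₁ n₁ n₂ n₃ ≠ 0 ∧ τ₂ n₁ n₂ n₃ ≠ 0 ∧ τ₃ n₁ n₂ n₃ ≠ 0)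
    (hcoef : ∀ a b : ℤ,
      u₁0 a b ≠ 0 ∧ w₁0 a b ≠ 0 ∧ κ₁ a b ≠ 0 ∧
      u₂0 a b ≠ 0 ∧ w₂0 a b ≠ 0 ∧ κ₂ a b ≠ 0 ∧
      u₃0 a b ≠ 0 ∧ w₃0 a b ≠ 0 ∧ κ₃ a b ≠ 0)
    -- the Legendre substitution
    (u₁ w₁ u₂ w₂ u₃ w₃ : ℤ → ℤ → ℤ → ℂ)
    (hu₁ : ∀ n₁ n₂ n₃ : ℤ,
      u₁ n₁ n₂ n₃ = u₁0 n₂ n₃ * τ₂ n₁ n₂ n₃ / τ₂ n₁ n₂ (n₃+1))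
    (hw₁ : ∀ n₁ n₂ n₃ : ℤ,
      w₁ n₁ n₂ n₃ = w₁0 n₂ n₃ * τ₃ n₁ (n₂+1) n₃ / τ₃ n₁ n₂ n₃)
    (hu₂ : ∀ n₁ n₂ n₃ : ℤ,
      u₂ n₁ n₂ n₃ = u₂0 n₁ n₃ * τ₁ n₁ n₂ n₃ / τ₁ n₁ n₂ (n₃+1))
    (hw₂ : ∀ n₁ n₂ n₃ : ℤ,
      w₂ n₁ n₂ n₃ = w₂0 n₁ n₃ * τ₃ n₁ n₂ n₃ / τ₃ (n₁+1) n₂ n₃)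
    (hu₃ : ∀ n₁ n₂ n₃ : ℤ,
      u₃ n₁ n₂ n₃ = u₃0 n₁ n₂ * τ₁ n₁ (n₂+1) n₃ / τ₁ n₁ n₂ n₃)
    (hw₃ : ∀ n₁ n₂ n₃ : ℤ,
      w₃ n₁ n₂ n₃ = w₃0 n₁ n₂ * τ₂ n₁ n₂ n₃ / τ₂ (n₁+1) n₂ n₃)
    -- the denominators
    (D₁ D₂ D₃ : ℤ → ℤ → ℤ → ℂ)
    (hD₁ : ∀ n₁ n₂ n₃ : ℤ, D₁ n₁ n₂ n₃ =
      κ₁ n₂ n₃ * u₁ n₁ n₂ n₃ * w₂ n₁ n₂ n₃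
      + κ₃ n₁ n₂ * u₂ n₁ n₂ n₃ * w₃ n₁ n₂ n₃
      + κ₁ n₂ n₃ * κ₃ n₁ n₂ * u₁ n₁ n₂ n₃ * w₃ n₁ n₂ n₃)
    (hD₂ : ∀ n₁ n₂ n₃ : ℤ, D₂ n₁ n₂ n₃ =
      u₂ n₁ n₂ n₃ * u₃ n₁ n₂ n₃ + u₂ n₁ n₂ n₃ * w₁ n₁ n₂ n₃
      + κ₁ n₂ n₃ * u₁ n₁ n₂ n₃ * w₁ n₁ n₂ n₃)
    (hD₃ : ∀ n₁ n₂ n₃ : ℤ, D₃ n₁ n₂ n₃ =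
      w₁ n₁ n₂ n₃ * w₂ n₁ n₂ n₃ + u₃ n₁ n₂ n₃ * w₂ n₁ n₂ n₃
      + κ₃ n₁ n₂ * u₃ n₁ n₂ n₃ * w₃ n₁ n₂ n₃)
    -- the trilinear coefficients
    (s₁ s₂ s₃ r₁ r₂ r₃ : ℤ → ℤ → ℤ → ℂ)
    (hs₁ : ∀ n₁ n₂ n₃ : ℤ, s₁ n₁ n₂ n₃ = κ₃ n₁ n₂ * w₃0 n₁ n₂ / w₂0 n₁ n₃)
    (hs₂ : ∀ n₁ n₂ n₃ : ℤ, s₂ n₁ n₂ n₃ = u₃0 n₁ n₂ / w₁0 n₂ n₃)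
    (hs₃ : ∀ n₁ n₂ n₃ : ℤ, s₃ n₁ n₂ n₃ = u₂0 n₁ n₃ / (κ₁ n₂ n₃ * u₁0 n₂ n₃))
    (hr₁ : ∀ n₁ n₂ n₃ : ℤ, r₁ n₁ n₂ n₃ =
      u₁0 n₂ n₃ * u₃0 n₁ n₂ / (w₁0 n₂ n₃ * u₂0 n₁ n₃))
    (hr₂ : ∀ n₁ n₂ n₃ : ℤ, r₂ n₁ n₂ n₃ =
      κ₂ n₁ n₃ * u₂0 n₁ n₃ * w₂0 n₁ n₃
        / (κ₁ n₂ n₃ * κ₃ n₁ n₂ * u₁0 n₂ n₃ * w₃0 n₁ n₂))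
    (hr₃ : ∀ n₁ n₂ n₃ : ℤ, r₃ n₁ n₂ n₃ =
      w₁0 n₂ n₃ * w₃0 n₁ n₂ / (w₂0 n₁ n₃ * u₃0 n₁ n₂))
    -- at a lattice point with nonvanishing denominators
    (n₁ n₂ n₃ : ℤ)
    (hD₁ne : D₁ n₁ n₂ n₃ ≠ 0) (hD₂ne : D₂ n₁ n₂ n₃ ≠ 0) (hD₃ne : D₃ n₁ n₂ n₃ ≠ 0) :
    -- the six equations of motion at n  ↔  the three trilinear equations at n
    ((u₁ (n₁+1) n₂ n₃ =
        κ₂ n₁ n₃ * u₁ n₁ n₂ n₃ * u₂ n₁ n₂ n₃ * w₂ n₁ n₂ n₃ / D₁ n₁ n₂ n₃) ∧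
     (w₁ (n₁+1) n₂ n₃ = D₃ n₁ n₂ n₃ / w₃ n₁ n₂ n₃) ∧
     (u₂ n₁ (n₂+1) n₃ =
        u₁ n₁ n₂ n₃ * u₂ n₁ n₂ n₃ * u₃ n₁ n₂ n₃ / D₂ n₁ n₂ n₃) ∧
     (w₂ n₁ (n₂+1) n₃ =
        w₁ n₁ n₂ n₃ * w₂ n₁ n₂ n₃ * w₃ n₁ n₂ n₃ / D₃ n₁ n₂ n₃) ∧
     (u₃ n₁ n₂ (n₃+1) = D₂ n₁ n₂ n₃ / u₁ n₁ n₂ n₃) ∧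
     (w₃ n₁ n₂ (n₃+1) =
        κ₂ n₁ n₃ * u₂ n₁ n₂ n₃ * w₂ n₁ n₂ n₃ * w₃ n₁ n₂ n₃ / D₁ n₁ n₂ n₃))
    ↔
    -- trilinear equation for (α,β,γ) = (1,2,3)
    ((r₁ n₁ n₂ n₃ * τ₁ n₁ (n₂+1) (n₃+1) * τ₂ n₁ n₂ n₃ * τ₃ n₁ n₂ n₃
        = τ₁ n₁ n₂ n₃ * τ₂ n₁ n₂ (n₃+1) * τ₃ n₁ (n₂+1) n₃
          + s₂ n₁ n₂ n₃ * τ₁ n₁ (n₂+1) n₃ * τ₂ n₁ n₂ (n₃+1) * τ₃ n₁ n₂ n₃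
          + (s₃ n₁ n₂ n₃)⁻¹ * τ₁ n₁ n₂ (n₃+1) * τ₂ n₁ n₂ n₃ * τ₃ n₁ (n₂+1) n₃) ∧
     -- trilinear equation for (α,β,γ) = (2,3,1)
     (r₂ n₁ n₂ n₃ * τ₂ (n₁+1) n₂ (n₃+1) * τ₃ n₁ n₂ n₃ * τ₁ n₁ n₂ n₃
        = τ₂ n₁ n₂ n₃ * τ₃ (n₁+1) n₂ n₃ * τ₁ n₁ n₂ (n₃+1)
          + s₃ n₁ n₂ n₃ * τ₂ n₁ n₂ (n₃+1) * τ₃ (n₁+1) n₂ n₃ * τ₁ n₁ n₂ n₃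
          + (s₁ n₁ n₂ n₃)⁻¹ * τ₂ (n₁+1) n₂ n₃ * τ₃ n₁ n₂ n₃ * τ₁ n₁ n₂ (n₃+1)) ∧
     -- trilinear equation for (α,β,γ) = (3,1,2)
     (r₃ n₁ n₂ n₃ * τ₃ (n₁+1) (n₂+1) n₃ * τ₁ n₁ n₂ n₃ * τ₂ n₁ n₂ n₃
        = τ₃ n₁ n₂ n₃ * τ₁ n₁ (n₂+1) n₃ * τ₂ (n₁+1) n₂ n₃
          + s₁ n₁ n₂ n₃ * τ₃ (n₁+1) n₂ n₃ * τ₁ n₁ (n₂+1) n₃ * τ₂ n₁ n₂ n₃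
          + (s₂ n₁ n₂ n₃)⁻¹ * τ₃ n₁ (n₂+1) n₃ * τ₁ n₁ n₂ n₃ * τ₂ (n₁+1) n₂ n₃)) := by
  obtain ⟨ha, hb, hk₁, -⟩ := hcoef n₂ n₃
  obtain ⟨-, -, -, hc, hd, -⟩ := hcoef n₁ n₃
  obtain ⟨-, -, -, -, -, -, he, hf, hk₃⟩ := hcoef n₁ n₂
  obtain ⟨hA, hB, hC⟩ := hτ n₁ n₂ n₃
  obtain ⟨-, hB₁, hC₁⟩ := hτ (n₁+1) n₂ n₃
  obtain ⟨hA₂, -, hC₂⟩ := hτ n₁ (n₂+1) n₃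
  obtain ⟨hA₃, hB₃, -⟩ := hτ n₁ n₂ (n₃+1)
  have hB₁₃ := (hτ (n₁+1) n₂ (n₃+1)).2.1
  have hC₁₂ := (hτ (n₁+1) (n₂+1) n₃).2.2
  have hA₂₃ := (hτ n₁ (n₂+1) (n₃+1)).1
  rw [← motion_iff_trilinear_123 ha hb hc hA hA₂ hA₃ hA₂₃ hB hB₃ hC hD₂ne (hu₁ ..) (hw₁ ..)
      (hu₂ ..) (hu₃ ..) (hu₂ ..) (hu₃ ..) (hD₂ ..) (hr₁ ..) (hs₂ ..) (hs₃ ..),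
    ← motion_iff_trilinear_231 ha hk₁ hk₃ hf hA₃ hB hB₁ hB₃ hB₁₃ hC₁ hD₁ne (hu₁ ..) (hu₂ ..)
      (hw₂ ..) (hw₃ ..) (hu₁ ..) (hw₃ ..) (hD₁ ..) (hr₂ ..) (hs₁ ..) (hs₃ ..),
    ← motion_iff_trilinear_312 hd he hf hA hB hB₁ hC hC₁ hC₂ hC₁₂ hD₃ne (hw₁ ..) (hw₂ ..)
      (hu₃ ..) (hw₃ ..) (hw₁ ..) (hw₂ ..) (hD₃ ..) (hr₃ ..) (hs₁ ..) (hs₂ ..)]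
  tauto
end

section
/- Suppose complex numbers Φ₀, Φ₁, Φ₂, Φ₃, Φ₁₂, Φ₁₃, Φ₂₃ (attached to the seven vertices n, n+e₁, n+e₂, n+e₃, n+e₁+e₂, n+e₁+e₃, n+e₂+e₃ of a unit cube) satisfy the incoming linear system: Φ₂ − Φ₂₃u₁ + Φ₀w₁ + Φ₃κ₁u₁w₁ = 0, Φ₀ − Φ₃u₂ + Φ₁w₂ + Φ₁₃κ₂u₂w₂ = 0, Φ₂ − Φ₀u₃ + Φ₁₂w₃ + Φ₁κ₃u₃w₃ = 0. Then there exists Ψ ∈ ℂ (the linear variable at the eighth vertex n+e₁+e₂+e₃) such that the outgoing linear system holds with the evolved variables: Φ₁₂ − Ψu₁′ + Φ₁w₁′ + Φ₁₃κ₁u₁′w₁′ = 0, Φ₂ − Φ₂₃u₂′ + Φ₁₂w₂′ + Ψκ₂u₂′w₂′ = 0, Φ₂₃ − Φ₃u₃′ + Ψw₃′ + Φ₁₃κ₃u₃′w₃′ = 0 (the last equation correcting an evident misprint in the paper, where the coefficient of κ₃u₃′w₃′ should be the linear variable at n+e₁+e₃). Thus the incoming and outgoing linear systems around a vertex of the cubic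 lattice are compatible exactly under the local evolution map. -/
/-!
The third outgoing equation is linear in `Ψ` with coefficient `w₃' ≠ 0`, so it determines `Ψ`.
Once denominators are cleared, the other two outgoing equations are linear combinations of the
incoming equations and of the third outgoing one. The shape of the evolution map enters only
through the identities `κ₃ w₃ D₂ + κ₁ u₁ D₃ = (u₃ + w₁) D₁` and `u₂ D₃ + w₁ D₁ = (w₂ + κ₃ w₃) D₂`.
-/

section
variable {R : Type*} [CommRing R] {u₁ w₁ u₂ w₂ u₃ w₃ κ₁ κ₃ D₁ D₂ D₃ : R}

theorem denominators_relation₁ (hD₁ : D₁ = κ₁ * u₁ * w₂ + κ₃ * u₂ * w₃ + κ₁ * κ₃ * u₁ * w₃)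
    (hD₂ : D₂ = u₂ * u₃ + u₂ * w₁ + κ₁ * u₁ * w₁) (hD₃ : D₃ = w₁ * w₂ + u₃ * w₂ + κ₃ * u₃ * w₃) :
    κ₃ * w₃ * D₂ + κ₁ * u₁ * D₃ = (u₃ + w₁) * D₁ := by
  subst hD₁ hD₂ hD₃; ring

theorem denominators_relation₂ (hD₁ : D₁ = κ₁ * u₁ * w₂ + κ₃ * u₂ * w₃ + κ₁ * κ₃ * u₁ * w₃)
    (hD₂ : D₂ = u₂ * u₃ + u₂ * w₁ + κ₁ * u₁ * w₁) (hD₃ : D₃ = w₁ * w₂ + u₃ * w₂ + κ₃ * u₃ * w₃) :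
    u₂ * D₃ + w₁ * D₁ = (w₂ + κ₃ * w₃) * D₂ := by
  subst hD₁ hD₂ hD₃; ring
end

variable {K : Type*} [Field K]
  {u₁ w₁ u₂ w₂ u₃ w₃ κ₁ κ₂ κ₃ D₁ D₂ D₃ u₁' w₁' u₂' w₂' u₃' w₃' Φ₀ Φ₁ Φ₂ Φ₃ Φ₁₂ Φ₁₃ Φ₂₃ Ψ : K}

theorem outgoing₁_of_outgoing₃ (hu₁ : u₁ ≠ 0) (hw₃ : w₃ ≠ 0) (hD₁ : D₁ ≠ 0)
    (hD₁def : D₁ = κ₁ * u₁ * w₂ + κ₃ * u₂ * w₃ + κ₁ * κ₃ * u₁ * w₃)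
    (hD₂def : D₂ = u₂ * u₃ + u₂ * w₁ + κ₁ * u₁ * w₁)
    (hD₃def : D₃ = w₁ * w₂ + u₃ * w₂ + κ₃ * u₃ * w₃)
    (hu₁' : u₁' = κ₂ * u₁ * u₂ * w₂ / D₁) (hw₁' : w₁' = D₃ / w₃)
    (hu₃' : u₃' = D₂ / u₁) (hw₃' : w₃' = κ₂ * u₂ * w₂ * w₃ / D₁)
    (hin₁ : Φ₂ - Φ₂₃ * u₁ + Φ₀ * w₁ + Φ₃ * (κ₁ * u₁ * w₁) = 0)
    (hin₂ : Φ₀ - Φ₃ * u₂ + Φ₁ * w₂ + Φ₁₃ * (κ₂ * u₂ * w₂) = 0)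
    (hin₃ : Φ₂ - Φ₀ * u₃ + Φ₁₂ * w₃ + Φ₁ * (κ₃ * u₃ * w₃) = 0)
    (hout₃ : Φ₂₃ - Φ₃ * u₃' + Ψ * w₃' + Φ₁₃ * (κ₃ * u₃' * w₃') = 0) :
    Φ₁₂ - Ψ * u₁' + Φ₁ * w₁' + Φ₁₃ * (κ₁ * u₁' * w₁') = 0 := by
  have hu₁w₃ : u₁' * w₃ = u₁ * w₃' := by rw [hu₁', hw₃']; ring
  have hw₁w₃ : w₃ * w₁' = D₃ := by rw [hw₁']; field_simp
  have hu₁u₃ : u₁ * u₃' = D₂ := by rw [hu₃']; field_simp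
  have hΦ₁₃ : κ₃ * D₂ * w₃' + κ₁ * D₃ * u₁' = κ₂ * u₂ * w₂ * (u₃ + w₁) := by
    rw [hw₃', hu₁']; field_simp
    linear_combination κ₂ * u₂ * w₂ * denominators_relation₁ hD₁def hD₂def hD₃def
  apply mul_left_cancel₀ hw₃
  linear_combination -Ψ * hu₁w₃ + (Φ₁ + Φ₁₃ * κ₁ * u₁') * hw₁w₃ - u₁ * hout₃
    - (Φ₃ - Φ₁₃ * κ₃ * w₃') * hu₁u₃ + Φ₁₃ * hΦ₁₃ - hin₁ + (w₁ + u₃) * hin₂ + hin₃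
    - Φ₃ * hD₂def + Φ₁ * hD₃def

theorem outgoing₂_of_outgoing₃ (hu₁ : u₁ ≠ 0) (hD₁ : D₁ ≠ 0) (hD₂ : D₂ ≠ 0) (hD₃ : D₃ ≠ 0)
    (hD₁def : D₁ = κ₁ * u₁ * w₂ + κ₃ * u₂ * w₃ + κ₁ * κ₃ * u₁ * w₃)
    (hD₂def : D₂ = u₂ * u₃ + u₂ * w₁ + κ₁ * u₁ * w₁)
    (hD₃def : D₃ = w₁ * w₂ + u₃ * w₂ + κ₃ * u₃ * w₃)
    (hu₂' : u₂' = u₁ * u₂ * u₃ / D₂) (hw₂' : w₂' = w₁ * w₂ * w₃ / D₃)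
    (hu₃' : u₃' = D₂ / u₁) (hw₃' : w₃' = κ₂ * u₂ * w₂ * w₃ / D₁)
    (hin₁ : Φ₂ - Φ₂₃ * u₁ + Φ₀ * w₁ + Φ₃ * (κ₁ * u₁ * w₁) = 0)
    (hin₂ : Φ₀ - Φ₃ * u₂ + Φ₁ * w₂ + Φ₁₃ * (κ₂ * u₂ * w₂) = 0)
    (hin₃ : Φ₂ - Φ₀ * u₃ + Φ₁₂ * w₃ + Φ₁ * (κ₃ * u₃ * w₃) = 0)
    (hout₃ : Φ₂₃ - Φ₃ * u₃' + Ψ * w₃' + Φ₁₃ * (κ₃ * u₃' * w₃') = 0) :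
    Φ₂ - Φ₂₃ * u₂' + Φ₁₂ * w₂' + Ψ * (κ₂ * u₂' * w₂') = 0 := by
  have hu₂D₂ : D₂ * u₂' = u₁ * u₂ * u₃ := by rw [hu₂']; field_simp
  have hw₂D₃ : D₃ * w₂' = w₁ * w₂ * w₃ := by rw [hw₂']; field_simp
  have hw₃D₁ : D₁ * w₃' = κ₂ * u₂ * w₂ * w₃ := by rw [hw₃']; field_simp
  have hu₁u₃ : u₁ * u₃' = D₂ := by rw [hu₃']; field_simp
  have hrel := denominators_relation₂ hD₁def hD₂def hD₃def
  apply mul_left_cancel₀ (mul_ne_zero hD₂ hD₃)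
  linear_combination (Ψ * κ₂ * w₂' - Φ₂₃) * D₃ * hu₂D₂ + (Φ₁₂ * D₂ + Ψ * κ₂ * u₁ * u₂ * u₃) * hw₂D₃
    - u₃ * w₁ * (Ψ * u₁ + Φ₁₃ * κ₃ * D₂) * hw₃D₁ + u₁ * u₃ * w₁ * D₁ * hout₃
    + u₃ * w₁ * D₁ * (Φ₃ - Φ₁₃ * κ₃ * w₃') * hu₁u₃
    - Φ₂₃ * u₁ * u₃ * hrel
    + D₂ * (u₃ * (w₂ + κ₃ * w₃) * hin₁ - u₃ * w₁ * κ₃ * w₃ * hin₂ + w₁ * w₂ * hin₃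
      + Φ₂ * hD₃def + u₃ * w₁ * Φ₃ * hD₁def)

theorem statement5_general
    (u₁ w₁ u₂ w₂ u₃ w₃ κ₁ κ₂ κ₃ D₁ D₂ D₃ u₁' w₁' u₂' w₂' u₃' w₃' : ℂ)
    (hu₁ : u₁ ≠ 0) (hu₂ : u₂ ≠ 0) (hw₂ : w₂ ≠ 0) (hw₃ : w₃ ≠ 0) (hκ₂ : κ₂ ≠ 0)
    (hD₁def : D₁ = κ₁ * u₁ * w₂ + κ₃ * u₂ * w₃ + κ₁ * κ₃ * u₁ * w₃)
    (hD₂def : D₂ = u₂ * u₃ + u₂ * w₁ + κ₁ * u₁ * w₁)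
    (hD₃def : D₃ = w₁ * w₂ + u₃ * w₂ + κ₃ * u₃ * w₃)
    (hD₁ : D₁ ≠ 0) (hD₂ : D₂ ≠ 0) (hD₃ : D₃ ≠ 0)
    (hu₁' : u₁' = κ₂ * u₁ * u₂ * w₂ / D₁)
    (hw₁' : w₁' = D₃ / w₃)
    (hu₂' : u₂' = u₁ * u₂ * u₃ / D₂)
    (hw₂' : w₂' = w₁ * w₂ * w₃ / D₃)
    (hu₃' : u₃' = D₂ / u₁)
    (hw₃' : w₃' = κ₂ * u₂ * w₂ * w₃ / D₁)
    (Φ₀ Φ₁ Φ₂ Φ₃ Φ₁₂ Φ₁₃ Φ₂₃ : ℂ)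
    (hin₁ : Φ₂ - Φ₂₃ * u₁ + Φ₀ * w₁ + Φ₃ * (κ₁ * u₁ * w₁) = 0)
    (hin₂ : Φ₀ - Φ₃ * u₂ + Φ₁ * w₂ + Φ₁₃ * (κ₂ * u₂ * w₂) = 0)
    (hin₃ : Φ₂ - Φ₀ * u₃ + Φ₁₂ * w₃ + Φ₁ * (κ₃ * u₃ * w₃) = 0) :
    ∃ Ψ : ℂ,
      (Φ₁₂ - Ψ * u₁' + Φ₁ * w₁' + Φ₁₃ * (κ₁ * u₁' * w₁') = 0) ∧
      (Φ₂ - Φ₂₃ * u₂' + Φ₁₂ * w₂' + Ψ * (κ₂ * u₂' * w₂') = 0) ∧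
      (Φ₂₃ - Φ₃ * u₃' + Ψ * w₃' + Φ₁₃ * (κ₃ * u₃' * w₃') = 0) := by
  have hw₃'ne : w₃' ≠ 0 := by
    rw [hw₃']
    exact div_ne_zero (by simp [hκ₂, hu₂, hw₂, hw₃]) hD₁
  obtain ⟨Ψ, hout₃⟩ : ∃ Ψ, Φ₂₃ - Φ₃ * u₃' + Ψ * w₃' + Φ₁₃ * (κ₃ * u₃' * w₃') = 0 :=
    ⟨(Φ₃ * u₃' - Φ₂₃ - Φ₁₃ * (κ₃ * u₃' * w₃')) / w₃', by field_simp; ring⟩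
  exact ⟨Ψ,
    outgoing₁_of_outgoing₃ hu₁ hw₃ hD₁ hD₁def hD₂def hD₃def hu₁' hw₁' hu₃' hw₃' hin₁ hin₂ hin₃ hout₃,
    outgoing₂_of_outgoing₃ hu₁ hD₁ hD₂ hD₃ hD₁def hD₂def hD₃def hu₂' hw₂' hu₃' hw₃' hin₁ hin₂ hin₃
      hout₃,
    hout₃⟩

/-- If the seven linear variables around a vertex of the
cubic lattice satisfy the incoming linear system, then there exists a value
`Ψ` of the linear variable at the eighth vertex such that the outgoing
linear system holds with the evolved dynamical variables: the incoming and
outgoing linear systems are compatible exactly under the local evolution map. -/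
theorem statement5
    (u₁ w₁ u₂ w₂ u₃ w₃ κ₁ κ₂ κ₃ D₁ D₂ D₃ u₁' w₁' u₂' w₂' u₃' w₃' : ℂ)
    (hu₁ : u₁ ≠ 0) (hw₁ : w₁ ≠ 0) (hu₂ : u₂ ≠ 0) (hw₂ : w₂ ≠ 0)
    (hu₃ : u₃ ≠ 0) (hw₃ : w₃ ≠ 0)
    (hκ₁ : κ₁ ≠ 0) (hκ₂ : κ₂ ≠ 0) (hκ₃ : κ₃ ≠ 0)
    (hD₁def : D₁ = κ₁ * u₁ * w₂ + κ₃ * u₂ * w₃ + κ₁ * κ₃ * u₁ * w₃)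
    (hD₂def : D₂ = u₂ * u₃ + u₂ * w₁ + κ₁ * u₁ * w₁)
    (hD₃def : D₃ = w₁ * w₂ + u₃ * w₂ + κ₃ * u₃ * w₃)
    (hD₁ : D₁ ≠ 0) (hD₂ : D₂ ≠ 0) (hD₃ : D₃ ≠ 0)
    (hu₁' : u₁' = κ₂ * u₁ * u₂ * w₂ / D₁)
    (hw₁' : w₁' = D₃ / w₃)
    (hu₂' : u₂' = u₁ * u₂ * u₃ / D₂)
    (hw₂' : w₂' = w₁ * w₂ * w₃ / D₃)
    (hu₃' : u₃' = D₂ / u₁)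
    (hw₃' : w₃' = κ₂ * u₂ * w₂ * w₃ / D₁)
    (Φ₀ Φ₁ Φ₂ Φ₃ Φ₁₂ Φ₁₃ Φ₂₃ : ℂ)
    (hin₁ : Φ₂ - Φ₂₃ * u₁ + Φ₀ * w₁ + Φ₃ * (κ₁ * u₁ * w₁) = 0)
    (hin₂ : Φ₀ - Φ₃ * u₂ + Φ₁ * w₂ + Φ₁₃ * (κ₂ * u₂ * w₂) = 0)
    (hin₃ : Φ₂ - Φ₀ * u₃ + Φ₁₂ * w₃ + Φ₁ * (κ₃ * u₃ * w₃) = 0) :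
    ∃ Ψ : ℂ,
      (Φ₁₂ - Ψ * u₁' + Φ₁ * w₁' + Φ₁₃ * (κ₁ * u₁' * w₁') = 0) ∧
      (Φ₂ - Φ₂₃ * u₂' + Φ₁₂ * w₂' + Ψ * (κ₂ * u₂' * w₂') = 0) ∧
      (Φ₂₃ - Φ₃ * u₃' + Ψ * w₃' + Φ₁₃ * (κ₃ * u₃' * w₃') = 0) :=
  statement5_general u₁ w₁ u₂ w₂ u₃ w₃ κ₁ κ₂ κ₃ D₁ D₂ D₃ u₁' w₁' u₂' w₂' u₃' w₃' hu₁ hu₂ hw₂ hw₃ hκ₂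
    hD₁def hD₂def hD₃def hD₁ hD₂ hD₃ hu₁' hw₁' hu₂' hw₂' hu₃' hw₃' Φ₀ Φ₁ Φ₂ Φ₃ Φ₁₂ Φ₁₃ Φ₂₃ hin₁ hin₂
    hin₃
end

section
/- Rational Fay identity: let f₀, …, f_{g−1} ∈ ℂ and let A, B, C, D ∈ ℂ satisfy A, B, C, D ∉ {q₀, …, q_{g−1}} and B, D ∉ {p₀, …, p_{g−1}}. Then (A−D)(C−B)·H((f_k σ_k(A)/σ_k(B))_k)·H((f_k σ_k(C)/σ_k(D))_k) + (A−B)(D−C)·H((f_k σ_k(A)/σ_k(D))_k)·H((f_k σ_k(C)/σ_k(B))_k) = (A−C)(D−B)·H((f_k)_k)·H((f_k σ_k(A)σ_k(C)/(σ_k(B)σ_k(D)))_k). -/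
/-!
`Hdet p q x` is `det (q_j ^ i - x_j p_j ^ i)` divided by a constant. Border this `g × g` matrix
by the two Vandermonde columns `(z ^ i)`, `(u ^ i)` to a `(2 + g) × (2 + g)` matrix `N(z, u)` whose
other columns are `(q_j ^ i - a_j p_j ^ i)`. Trading the monomials `X ^ (k + 2)` for
`X ^ k (X - z) (X - u)` is a unitriangular row operation after which `N(z, u)` is block triangular,
so `det N(z, u) = (u - z) ∏_j (q_j - z)(q_j - u) · det (q_j ^ i - a_j σ_j(z) σ_j(u) p_j ^ i)`.
The Fay identity is the three-term Plücker relation among `N(A, B)`, `N(C, D)`, … (two columns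
varying, the rest fixed), taken with `a_j = f_j / (σ_j(B) σ_j(D))`.
-/

/-- The rational limit `H` of the theta function: for amplitudes
`x = (x₀,…,x_{g−1})`,
`H(x) = det((q_j)^i − x_j (p_j)^i) / ∏_{j<i} (q_i − q_j)`. -/
noncomputable def Hdet {g : ℕ} (p q x : Fin g → ℂ) : ℂ :=
  (Matrix.of fun i j : Fin g => q j ^ (i : ℕ) - x j * p j ^ (i : ℕ)).det /
    ∏ i : Fin g, ∏ j ∈ Finset.Iio i, (q i - q j)

/-- The rational function `σ(z) = (p − z)/(q − z)`. -/
noncomputable def sig (p q z : ℂ) : ℂ := (p - z) / (q - z)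

open Matrix Polynomial

section Plucker

variable {n R : Type*} [DecidableEq n] [Fintype n] [CommRing R]

theorem Matrix.plucker_relation_updateCol (M : Matrix n n R) {i₁ i₂ : n} (h : i₁ ≠ i₂)
    (a b c d : n → R) :
    ((M.updateCol i₁ a).updateCol i₂ b).det * ((M.updateCol i₁ c).updateCol i₂ d).det
      = ((M.updateCol i₁ a).updateCol i₂ c).det * ((M.updateCol i₁ b).updateCol i₂ d).det
        + ((M.updateCol i₁ a).updateCol i₂ d).det * ((M.updateCol i₁ c).updateCol i₂ b).det := by
  set U := M.updateCol i₁ a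
  set W := (M.updateCol i₁ c).updateCol i₂ d
  -- `x ↦ det (U.updateCol i₂ x)` is linear and kills every column of `W` other than `c` and `d`;
  -- apply it to Cramer's rule `W *ᵥ cramer W b = det W • b`.
  have hφ (x : n → R) : cramer U x i₂ = (U.updateCol i₂ x).det := cramer_apply U x i₂
  have hcol (j : n) (hj₁ : j ≠ i₁) (hj₂ : j ≠ i₂) : cramer U (fun i => W i j) i₂ = 0 := by
    rw [hφ]
    refine det_zero_of_column_eq hj₂.symm fun k => ?_
    simp [U, W, hj₁, hj₂]
  have hcramer := congrFun (congrArg (cramer U) (mulVec_cramer W b)) i₂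
  have hsum : W *ᵥ cramer W b = ∑ j, cramer W b j • fun i => W i j := by
    ext i
    simp [mulVec, dotProduct, Finset.sum_apply, mul_comm]
  rw [hsum, map_sum, Finset.sum_apply, ← Finset.sum_subset (Finset.subset_univ {i₁, i₂}),
    Finset.sum_pair h] at hcramer
  · simp only [map_smul, Pi.smul_apply, smul_eq_mul] at hcramer
    have hc : (fun i => W i i₁) = c := funext fun i => by simp [W, updateCol_ne h]
    have hd : (fun i => W i i₂) = d := funext fun i => by simp [W]
    have hb₁ : cramer W b i₁ = ((M.updateCol i₁ b).updateCol i₂ d).det := by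
      rw [cramer_apply, updateCol_comm _ h.symm, updateCol_idem]
    have hb₂ : cramer W b i₂ = ((M.updateCol i₁ c).updateCol i₂ b).det := by
      rw [cramer_apply, updateCol_idem]
    rw [hc, hd, hb₁, hb₂, hφ, hφ, hφ] at hcramer
    linear_combination -hcramer
  · intro j _ hj
    simp only [Finset.mem_insert, Finset.mem_singleton, not_or] at hj
    simp [hcol j hj.1 hj.2]

end Plucker

section Bordered

variable {R : Type*} [CommRing R] {g : ℕ}

theorem Polynomial.sum_fin_coeff_mul_pow {n : ℕ} (P : R[X]) (hP : P.natDegree < n) (r : R) :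
    ∑ k : Fin n, P.coeff k * r ^ (k : ℕ) = P.eval r := by
  rw [eval_eq_sum_range' hP, Fin.sum_univ_eq_sum_range (fun k => P.coeff k * r ^ k)]

def borderedMatrix (p q a : Fin g → R) (z u : R) : Matrix (Fin (2 + g)) (Fin (2 + g)) R :=
  of fun i => Fin.append ![z ^ (i : ℕ), u ^ (i : ℕ)] fun j => q j ^ (i : ℕ) - a j * p j ^ (i : ℕ)

noncomputable def borderPolys (z u : R) : Fin (2 + g) → R[X] :=
  Fin.append ![1, X] fun k => X ^ (k : ℕ) * ((X - C z) * (X - C u))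

theorem monic_borderPolys (z u : R) (i : Fin (2 + g)) : (borderPolys z u i).Monic := by
  refine Fin.addCases (fun r => ?_) (fun k => ?_) i
  · fin_cases r <;> simp [borderPolys]
  · simp only [borderPolys, Fin.append_right]
    exact (monic_X_pow _).mul ((monic_X_sub_C z).mul (monic_X_sub_C u))

theorem natDegree_borderPolys [Nontrivial R] (z u : R) (i : Fin (2 + g)) :
    (borderPolys z u i).natDegree = i := by
  refine Fin.addCases (fun r => ?_) (fun k => ?_) i
  · fin_cases r <;> simp [borderPolys]
  · simp only [borderPolys, Fin.append_right, Fin.val_natAdd]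
    rw [(monic_X_pow _).natDegree_mul ((monic_X_sub_C z).mul (monic_X_sub_C u)),
      (monic_X_sub_C z).natDegree_mul (monic_X_sub_C u)]
    simp [add_comm]

theorem updateCol_borderedMatrix (p q a : Fin g → R) (z u z' u' : R) :
    ((borderedMatrix p q a z u).updateCol (Fin.castAdd g 0) (fun i => z' ^ (i : ℕ))).updateCol
        (Fin.castAdd g 1) (fun i => u' ^ (i : ℕ)) = borderedMatrix p q a z' u' := by
  ext i j
  refine Fin.addCases (fun r => ?_) (fun k => ?_) j
  · fin_cases r <;> simp [borderedMatrix]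
  · simp [borderedMatrix, Fin.ext_iff, show (2 + k : ℕ) ≠ 1 by omega]

theorem coeffMatrix_mul_borderedMatrix (P : Fin (2 + g) → R[X])
    (hP : ∀ i, (P i).natDegree < 2 + g) (p q a : Fin g → R) (z u : R) :
    (of fun i k : Fin (2 + g) => (P i).coeff k) * borderedMatrix p q a z u
      = of fun i => Fin.append ![(P i).eval z, (P i).eval u]
          fun j => (P i).eval (q j) - a j * (P i).eval (p j) := by
  ext i j
  simp only [mul_apply, of_apply, borderedMatrix, ← sum_fin_coeff_mul_pow _ (hP i)]
  refine Fin.addCases (fun r => ?_) (fun k => ?_) j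
  · fin_cases r <;> simp
  · simp [mul_sub, Finset.sum_sub_distrib, Finset.mul_sum, mul_left_comm]

theorem det_borderedMatrix [Nontrivial R] (p q a : Fin g → R) (z u : R) :
    (borderedMatrix p q a z u).det = (u - z) * (of fun i j : Fin g => q j ^ (i : ℕ) *
      ((q j - z) * (q j - u)) - a j * (p j ^ (i : ℕ) * ((p j - z) * (p j - u)))).det := by
  have hcoeff : (of fun i k : Fin (2 + g) => (borderPolys z u i).coeff k).det = 1 := by
    rw [← det_transpose]
    exact det_matrixOfPolynomials _ (natDegree_borderPolys z u) (monic_borderPolys z u)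
  rw [← one_mul (borderedMatrix p q a z u).det, ← hcoeff, ← det_mul,
    coeffMatrix_mul_borderedMatrix _ (fun i => (natDegree_borderPolys z u i).trans_lt i.2),
    ← det_submatrix_equiv_self finSumFinEquiv]
  -- `X ^ k * (X - z) * (X - u)` vanishes at `z` and `u`, so the lower-left block is zero
  have hblock : (of fun i => Fin.append ![(borderPolys z u i).eval z, (borderPolys z u i).eval u]
      fun j => (borderPolys z u i).eval (q j) - a j * (borderPolys z u i).eval (p j)).submatrix
        finSumFinEquiv finSumFinEquiv
      = fromBlocks !![1, 1; z, u]
          (of fun r j => (![1, X] r : R[X]).eval (q j) - a j * (![1, X] r : R[X]).eval (p j)) 0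
          (of fun i j : Fin g => q j ^ (i : ℕ) * ((q j - z) * (q j - u))
            - a j * (p j ^ (i : ℕ) * ((p j - z) * (p j - u)))) := by
    ext (r | i) (s | j)
    · fin_cases r <;> fin_cases s <;> simp [borderPolys]
    · simp [borderPolys]
    · fin_cases s <;> simp [borderPolys]
    · simp [borderPolys]
  rw [hblock, det_fromBlocks_zero₂₁, det_fin_two_of]
  ring

end Bordered

theorem sig_ne_zero {p q z : ℂ} (hp : z ≠ p) (hq : z ≠ q) : sig p q z ≠ 0 :=
  div_ne_zero (sub_ne_zero.2 hp.symm) (sub_ne_zero.2 hq.symm)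

section Fay

variable {g : ℕ} (p q a : Fin g → ℂ)

def hMatrix (x : Fin g → ℂ) : Matrix (Fin g) (Fin g) ℂ :=
  of fun i j => q j ^ (i : ℕ) - x j * p j ^ (i : ℕ)

noncomputable def sigTwist (z u : ℂ) (j : Fin g) : ℂ :=
  a j * sig (p j) (q j) z * sig (p j) (q j) u

theorem det_borderedMatrix_eq_det_hMatrix {z u : ℂ} (hz : ∀ k, z ≠ q k) (hu : ∀ k, u ≠ q k) :
    (borderedMatrix p q a z u).det
      = (u - z) * ((∏ j, (q j - z)) * ∏ j, (q j - u)) * (hMatrix p q (sigTwist p q a z u)).det := by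
  rw [det_borderedMatrix, ← Finset.prod_mul_distrib, mul_assoc, ← det_mul_row]
  congr 2
  ext i j
  have hz' : q j - z ≠ 0 := sub_ne_zero.2 (hz j).symm
  have hu' : q j - u ≠ 0 := sub_ne_zero.2 (hu j).symm
  simp only [hMatrix, sigTwist, sig, of_apply]
  field_simp

variable {p q}

theorem fay_det {A B C D : ℂ} (hA : ∀ k, A ≠ q k) (hB : ∀ k, B ≠ q k) (hC : ∀ k, C ≠ q k)
    (hD : ∀ k, D ≠ q k) :
    (A - D) * (C - B) * (hMatrix p q (sigTwist p q a A D)).det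
        * (hMatrix p q (sigTwist p q a C B)).det
      + (A - B) * (D - C) * (hMatrix p q (sigTwist p q a A B)).det
        * (hMatrix p q (sigTwist p q a C D)).det
      = (A - C) * (D - B) * (hMatrix p q (sigTwist p q a B D)).det
        * (hMatrix p q (sigTwist p q a A C)).det := by
  have hP := (borderedMatrix p q a 0 0).plucker_relation_updateCol
    (i₁ := Fin.castAdd g 0) (i₂ := Fin.castAdd g 1) (by simp)
    (fun i => A ^ (i : ℕ)) (fun i => B ^ (i : ℕ)) (fun i => C ^ (i : ℕ)) (fun i => D ^ (i : ℕ))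
  simp only [updateCol_borderedMatrix] at hP
  have hN {z u : ℂ} := @det_borderedMatrix_eq_det_hMatrix g p q a z u
  rw [hN hA hB, hN hC hD, hN hA hC, hN hB hD, hN hA hD, hN hC hB] at hP
  have hQ (z : ℂ) (hz : ∀ k, z ≠ q k) : ∏ j, (q j - z) ≠ 0 :=
    Finset.prod_ne_zero_iff.2 fun j _ => sub_ne_zero.2 (hz j).symm
  refine mul_left_cancel₀ (mul_ne_zero (mul_ne_zero (mul_ne_zero (hQ A hA) (hQ B hB)) (hQ C hC))
    (hQ D hD)) ?_
  linear_combination -hP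

theorem fay_det_hMatrix (f : Fin g → ℂ) {A B C D : ℂ} (hA : ∀ k, A ≠ q k) (hB : ∀ k, B ≠ q k)
    (hC : ∀ k, C ≠ q k) (hD : ∀ k, D ≠ q k) (hBp : ∀ k, B ≠ p k) (hDp : ∀ k, D ≠ p k) :
    (A - D) * (C - B)
        * (hMatrix p q fun k => f k * sig (p k) (q k) A / sig (p k) (q k) B).det
        * (hMatrix p q fun k => f k * sig (p k) (q k) C / sig (p k) (q k) D).det
      + (A - B) * (D - C)
        * (hMatrix p q fun k => f k * sig (p k) (q k) A / sig (p k) (q k) D).det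
        * (hMatrix p q fun k => f k * sig (p k) (q k) C / sig (p k) (q k) B).det
      = (A - C) * (D - B) * (hMatrix p q f).det
        * (hMatrix p q fun k => f k * (sig (p k) (q k) A * sig (p k) (q k) C)
            / (sig (p k) (q k) B * sig (p k) (q k) D)).det := by
  set a : Fin g → ℂ := fun k => f k / (sig (p k) (q k) B * sig (p k) (q k) D)
  have hσB (k : Fin g) := sig_ne_zero (hBp k) (hB k)
  have hσD (k : Fin g) := sig_ne_zero (hDp k) (hD k)
  have hAD : (fun k => f k * sig (p k) (q k) A / sig (p k) (q k) B) = sigTwist p q a A D :=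
    funext fun k => by simp only [sigTwist, a]; field_simp [hσB k, hσD k]
  have hCB : (fun k => f k * sig (p k) (q k) C / sig (p k) (q k) D) = sigTwist p q a C B :=
    funext fun k => by simp only [sigTwist, a]; field_simp [hσB k, hσD k]
  have hAB : (fun k => f k * sig (p k) (q k) A / sig (p k) (q k) D) = sigTwist p q a A B :=
    funext fun k => by simp only [sigTwist, a]; field_simp [hσB k, hσD k]
  have hCD : (fun k => f k * sig (p k) (q k) C / sig (p k) (q k) B) = sigTwist p q a C D :=
    funext fun k => by simp only [sigTwist, a]; field_simp [hσB k, hσD k]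
  have hBD : f = sigTwist p q a B D :=
    funext fun k => by simp only [sigTwist, a]; field_simp [hσB k, hσD k]
  have hAC : (fun k => f k * (sig (p k) (q k) A * sig (p k) (q k) C)
      / (sig (p k) (q k) B * sig (p k) (q k) D)) = sigTwist p q a A C :=
    funext fun k => by simp only [sigTwist, a]; field_simp [hσB k, hσD k]
  rw [hAD, hCB, hAB, hCD, hAC, hBD]
  exact fay_det a hA hB hC hD

end Fay

theorem statement6_general (g : ℕ) (p q : Fin g → ℂ)
    (f : Fin g → ℂ) (A B C D : ℂ)
    (hA : ∀ k, A ≠ q k) (hB : ∀ k, B ≠ q k) (hC : ∀ k, C ≠ q k) (hD : ∀ k, D ≠ q k)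
    (hBp : ∀ k, B ≠ p k) (hDp : ∀ k, D ≠ p k) :
    (A - D) * (C - B)
        * Hdet p q (fun k => f k * sig (p k) (q k) A / sig (p k) (q k) B)
        * Hdet p q (fun k => f k * sig (p k) (q k) C / sig (p k) (q k) D)
      + (A - B) * (D - C)
        * Hdet p q (fun k => f k * sig (p k) (q k) A / sig (p k) (q k) D)
        * Hdet p q (fun k => f k * sig (p k) (q k) C / sig (p k) (q k) B)
      = (A - C) * (D - B) * Hdet p q f
        * Hdet p q (fun k =>
            f k * (sig (p k) (q k) A * sig (p k) (q k) C)
              / (sig (p k) (q k) B * sig (p k) (q k) D)) := by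
  set V := ∏ i : Fin g, ∏ j ∈ Finset.Iio i, (q i - q j)
  have hH (x : Fin g → ℂ) : Hdet p q x = (hMatrix p q x).det / V := rfl
  simp only [hH]
  linear_combination (V⁻¹ * V⁻¹) * fay_det_hMatrix f hA hB hC hD hBp hDp

/-- The rational Fay identity: for `g ≥ 1`, pairwise distinct
`q₀,…,q_{g−1}`, amplitudes `f`, and points `A, B, C, D` avoiding the `q`'s
(with `B, D` also avoiding the `p`'s),
`(A−D)(C−B)·H(fσ(A)/σ(B))·H(fσ(C)/σ(D)) + (A−B)(D−C)·H(fσ(A)/σ(D))·H(fσ(C)/σ(B))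
 = (A−C)(D−B)·H(f)·H(fσ(A)σ(C)/(σ(B)σ(D)))`. -/
theorem statement6 (g : ℕ) (hg : 1 ≤ g) (p q : Fin g → ℂ)
    (hq : ∀ i j : Fin g, i ≠ j → q i ≠ q j)
    (f : Fin g → ℂ) (A B C D : ℂ)
    (hA : ∀ k, A ≠ q k) (hB : ∀ k, B ≠ q k) (hC : ∀ k, C ≠ q k) (hD : ∀ k, D ≠ q k)
    (hBp : ∀ k, B ≠ p k) (hDp : ∀ k, D ≠ p k) :
    (A - D) * (C - B)
        * Hdet p q (fun k => f k * sig (p k) (q k) A / sig (p k) (q k) B)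
        * Hdet p q (fun k => f k * sig (p k) (q k) C / sig (p k) (q k) D)
      + (A - B) * (D - C)
        * Hdet p q (fun k => f k * sig (p k) (q k) A / sig (p k) (q k) D)
        * Hdet p q (fun k => f k * sig (p k) (q k) C / sig (p k) (q k) B)
      = (A - C) * (D - B) * Hdet p q f
        * Hdet p q (fun k =>
            f k * (sig (p k) (q k) A * sig (p k) (q k) C)
              / (sig (p k) (q k) B * sig (p k) (q k) D)) :=
  statement6_general g p q f A B C D hA hB hC hD hBp hDp
end

section
/- Soliton solutions of the trilinear system: let X, X′, Y, Y′, Z, Z′ : ℕ → ℂ be sequences all of whose values avoid the set {p₀,…,p_{g−1}} ∪ {q₀,…,q_{g−1}}, and such that for every n = (n₁,n₂,n₃) ∈ ℕ³ the six numbers X_{n₁}, X′_{n₁}, Y_{n₂}, Y′_{n₂}, Z_{n₃}, Z′_{n₃} are pairwise distinct. For f₀, …, f_{g−1} ∈ ℂ define I_{n,k} = f_k · ∏_{m₁=0}^{n₁−1} σ_k(X′_{m₁})/σ_k(X_{m₁}) · ∏_{m₂=0}^{n₂−1} σ_k(Y′_{m₂})/σ_k(Y_{m₂}) · ∏_{m₃=0}^{n₃−1}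 σ_k(Z′_{m₃})/σ_k(Z_{m₃}), and set τ₁(n) = H((I_{n,k}/σ_k(X_{n₁}))_k), τ₂(n) = H((I_{n,k}/σ_k(Y_{n₂}))_k), τ₃(n) = H((I_{n,k}/σ_k(Z_{n₃}))_k). For each n let r_α, s_α (α = 1,2,3) be given by the corrected cross-ratio formulas with X₁ = X_{n₁}, X′₁ = X′_{n₁}, X₂ = Y_{n₂}, X′₂ = Y′_{n₂}, X₃ = Z_{n₃}, X′₃ = Z′_{n₃}. Then for every n ∈ ℕ³ and every cyclic permutation (α,β,γ) of (1,2,3), the trilinear equation r_α τ_α(n+e_β+e_γ) τ_β(n) τ_γ(n) = τ_α(n) τ_β(n+e_γ) τ_γ(n+e_β) + s_β τ_α(n+e_β) τ_β(n+e_γ) τ_γ(n) + s_γ⁻¹ τ_α(n+e_γ) τ_β(n) τ_γ(n+e_β) holds. -/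
/-- The corrected cross-ratio coefficient `s_α` built from
`X_α, X′_α, X_β, X_γ` (here `a = X_α`, `a' = X′_α`, `b = X_β`, `c = X_γ`). -/
noncomputable def sCoef (a a' b c : ℂ) : ℂ :=
  -((a - c) * (a' - b)) / ((a - b) * (a' - c))

/-- The corrected cross-ratio coefficient `r_α` built from
`X_α, X_β, X′_β, X_γ, X′_γ` (here `a = X_α`, `b = X_β`, `b' = X′_β`,
`c = X_γ`, `c' = X′_γ`). -/
noncomputable def rCoef (a b b' c c' : ℂ) : ℂ :=
  -((b' - c') * (a - b) * (a - c)) / ((b - c) * (a - b') * (a - c'))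


/-!
Fix `n` and put `b_k = I_{n,k} / (σ_k(X_{n₁}) σ_k(Y_{n₂}) σ_k(Z_{n₃}))`. Each of the eight tau
values in a trilinear equation is then `Q(u, v) = H(b σ(u) σ(v))` at two of the five points
`X_α, X_β, X′_β, X_γ, X′_γ`. Scaling the rows of the matrix of `H` by `(q_k − u)(q_k − v)` and
eliminating the two geometric rows `u^i`, `v^i` shows that `(v − u) Q(u, v)` equals, up to
factors depending on `u` or `v` alone, the bordered determinant `det[u^i; v^i; q_k^i − b_k p_k^i]`
of size `g + 2`. Determinants sharing all rows but two satisfy the three-term Plücker relation,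
and two instances of it, once the cross-ratio coefficients absorb the factors `v − u`, give the
trilinear equation. The other two equations are the first one for cyclically relabelled data.
-/

open Matrix

section Bordered

variable {R : Type*} [CommRing R] {n : ℕ}

def geomRow (m : ℕ) (u : R) : Fin m → R := fun i => u ^ (i : ℕ)

def pqRows (m : ℕ) (p q b : Fin n → R) : Fin n → Fin m → R :=
  fun k i => q k ^ (i : ℕ) - b k * p k ^ (i : ℕ)

def shiftSub (u : R) (r : Fin (n + 1) → R) : Fin n → R :=
  fun i => r i.succ - u * r i.castSucc

theorem det_cons_geom {a u : R} {r : Fin (n + 1) → R} (hr : ∀ i, r i = a * u ^ (i : ℕ))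
    (M : Fin n → Fin (n + 1) → R) :
    det (of (Fin.cons r M)) = a * det (of (shiftSub u ∘ M)) := by
  let A : Matrix (Fin (n + 1)) (Fin (n + 1)) R := Fin.cons r M
  let B : Matrix (Fin (n + 1)) (Fin (n + 1)) R := fun j => Fin.cons (A j 0) (shiftSub u (A j))
  have hB₀ : B 0 = Fin.cons a 0 := by
    refine congrArg₂ Fin.cons ((hr 0).trans (by simp)) (funext fun i => ?_)
    change r i.succ - u * r i.castSucc = 0
    rw [hr, hr, Fin.val_succ, Fin.val_castSucc, pow_succ]
    ring
  have hAB : det A = det B :=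
    det_eq_of_forall_col_eq_smul_add_pred (fun _ => u) (fun _ => rfl)
      (fun _ _ => (sub_add_cancel _ _).symm)
  rw [show of (Fin.cons r M) = A from rfl, hAB, det_succ_row_zero, Fin.sum_univ_succ, hB₀]
  simp only [Fin.cons_zero, Fin.cons_succ, Pi.zero_apply, mul_zero, zero_mul,
    Finset.sum_const_zero, add_zero, Fin.val_zero, pow_zero, one_mul, Fin.succAbove_zero]
  rfl

def borderedDet (W : Fin n → Fin (n + 2) → R) (x y : Fin (n + 2) → R) : R :=
  det (of (Fin.cons x (Fin.cons y W)))

theorem borderedDet_plucker (W : Fin n → Fin (n + 2) → R) (x y z w : Fin (n + 2) → R) :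
    borderedDet W x y * borderedDet W z w - borderedDet W x z * borderedDet W y w
      + borderedDet W x w * borderedDet W y z = 0 := by
  let B : Matrix (Fin (n + 2)) (Fin (n + 2)) R := Fin.cons y (Fin.cons w W)
  let L := (detRowAlternating (R := R) (n := Fin (n + 2))).toMultilinearMap.toLinearMap
    (Fin.cons x (Fin.cons 0 W)) 1
  have hL : ∀ v, L v = borderedDet W x v := by
    intro v
    rw [MultilinearMap.toLinearMap_apply, ← Fin.succ_zero_eq_one', ← Fin.cons_update,
      Fin.update_cons_zero]
    rfl
  have hcramer : B.det • z = ∑ k, (B.updateRow k z).det • B k := by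
    have := mulVec_cramer Bᵀ z
    rw [det_transpose, mulVec_transpose, vecMul_eq_sum] at this
    simpa only [cramer_transpose_apply] using this.symm
  -- `L` kills every row of `W`, so only the coefficients of `y` and `w` survive.
  have key := congrArg L hcramer
  rw [map_smul, map_sum] at key
  simp only [map_smul, smul_eq_mul, Fin.sum_univ_succ] at key
  have h₀ : (B.updateRow 0 z).det = borderedDet W z w :=
    congrArg (det ∘ of) (Fin.update_cons_zero _ _ _)
  have h₁ : (B.updateRow (Fin.succ 0) z).det = borderedDet W y z := by
    change det (of (Function.update (Fin.cons y (Fin.cons w W) : Fin (n + 2) → _) _ z)) = _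
    rw [← Fin.cons_update, Fin.update_cons_zero]
    rfl
  have hdup : ∀ i, borderedDet W x (W i) = 0 := fun i =>
    det_zero_of_row_eq (i := 1) (j := i.succ.succ) (by simp [Fin.ext_iff]) rfl
  have hB : B.det = borderedDet W y w := rfl
  simp only [h₀, h₁, hL, hB, B, Fin.cons_zero, Fin.cons_succ, hdup, mul_zero,
    Finset.sum_const_zero, add_zero] at key
  linear_combination -key

theorem borderedDet_geomRow (p q b : Fin n → R) (u v : R) :
    borderedDet (pqRows (n + 2) p q b) (geomRow (n + 2) u) (geomRow (n + 2) v)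
      = (v - u) * det (of fun k (i : Fin n) => (q k - u) * (q k - v) * q k ^ (i : ℕ)
          - b k * ((p k - u) * (p k - v)) * p k ^ (i : ℕ)) := by
  rw [borderedDet, det_cons_geom (r := geomRow _ u) (a := 1) (u := u) fun i => (one_mul _).symm,
    one_mul, Fin.comp_cons, det_cons_geom (a := v - u) (u := v) fun i => by
      simp only [shiftSub, geomRow, Fin.val_succ, Fin.val_castSucc, pow_succ]; ring]
  congr
  ext k i
  simp only [Function.comp_apply, shiftSub, pqRows, Fin.val_succ, Fin.val_castSucc, pow_succ]
  ring

end Bordered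

def IsPluckerOn {α R : Type*} [CommRing R] (E : α → α → R) (s : Set α) : Prop :=
  ∀ a ∈ s, ∀ b ∈ s, ∀ c ∈ s, ∀ d ∈ s, E a b * E c d - E a c * E b d + E a d * E b c = 0

section TwoPoint

variable {g : ℕ} (p q b : Fin g → ℂ)

noncomputable def twoPointTau (u v : ℂ) : ℂ :=
  Hdet p q fun k => b k * sig (p k) (q k) u * sig (p k) (q k) v

theorem borderedDet_geomRow_eq_twoPointTau {u v : ℂ} (hu : ∀ k, q k ≠ u)
    (hv : ∀ k, q k ≠ v) (hΔ : ∏ i : Fin g, ∏ j ∈ Finset.Iio i, (q i - q j) ≠ 0) :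
    borderedDet (pqRows (g + 2) p q b) (geomRow (g + 2) u) (geomRow (g + 2) v)
      = (v - u) * twoPointTau p q b u v * ((∏ i : Fin g, ∏ j ∈ Finset.Iio i, (q i - q j))
          * ((∏ k, (q k - u)) * ∏ k, (q k - v))) := by
  have hrow : (of fun k (i : Fin g) => (q k - u) * (q k - v) * q k ^ (i : ℕ)
        - b k * ((p k - u) * (p k - v)) * p k ^ (i : ℕ))
      = of fun k i => (q k - u) * (q k - v) * (of fun i j : Fin g =>
          q j ^ (i : ℕ) - (b j * sig (p j) (q j) u * sig (p j) (q j) v) * p j ^ (i : ℕ))ᵀ k i := by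
    ext k i
    have hqu := sub_ne_zero.2 (hu k)
    have hqv := sub_ne_zero.2 (hv k)
    simp only [of_apply, transpose_apply, sig]
    field_simp
  rw [borderedDet_geomRow, hrow, det_mul_column, det_transpose, twoPointTau, Hdet,
    Finset.prod_mul_distrib]
  field_simp

theorem twoPointTau_isPluckerOn (hq : Function.Injective q) :
    IsPluckerOn (fun u v => (v - u) * twoPointTau p q b u v) {u | ∀ k, q k ≠ u} := by
  set Δ := ∏ i : Fin g, ∏ j ∈ Finset.Iio i, (q i - q j)
  set D := fun u v => borderedDet (pqRows (g + 2) p q b) (geomRow (g + 2) u) (geomRow (g + 2) v)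
  have hΔ : Δ ≠ 0 :=
    Finset.prod_ne_zero_iff.2 fun i _ => Finset.prod_ne_zero_iff.2 fun j hj =>
      sub_ne_zero.2 <| hq.ne (Finset.mem_Iio.1 hj).ne'
  have hP : ∀ u ∈ {u | ∀ k, q k ≠ u}, ∏ k, (q k - u) ≠ 0 := fun u hu =>
    Finset.prod_ne_zero_iff.2 fun k _ => sub_ne_zero.2 (hu k)
  have hE : ∀ u ∈ {u | ∀ k, q k ≠ u}, ∀ v ∈ {u | ∀ k, q k ≠ u},
      (v - u) * twoPointTau p q b u v = D u v / (Δ * ((∏ k, (q k - u)) * ∏ k, (q k - v))) :=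
    fun u hu v hv => (eq_div_iff (mul_ne_zero hΔ (mul_ne_zero (hP u hu) (hP v hv)))).2
      (borderedDet_geomRow_eq_twoPointTau p q b hu hv hΔ).symm
  intro x hx y hy z hz w hw
  simp only [hE _ hx _ hy, hE _ hx _ hz, hE _ hx _ hw, hE _ hy _ hz, hE _ hy _ hw, hE _ hz _ hw]
  linear_combination borderedDet_plucker (pqRows (g + 2) p q b) (geomRow (g + 2) x)
      (geomRow (g + 2) y) (geomRow (g + 2) z) (geomRow (g + 2) w) /
    (Δ ^ 2 * (∏ k, (q k - x)) * (∏ k, (q k - y)) * (∏ k, (q k - z)) * ∏ k, (q k - w))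

end TwoPoint

theorem trilinear_of_isPluckerOn {T : ℂ → ℂ → ℂ} {s : Set ℂ}
    (hT : IsPluckerOn (fun u v => (v - u) * T u v) s) {x y y' z z' : ℂ}
    (hx : x ∈ s) (hy : y ∈ s) (hy' : y' ∈ s) (hz : z ∈ s) (hz' : z' ∈ s)
    (hxy : x ≠ y) (hxy' : x ≠ y') (hxz : x ≠ z) (hxz' : x ≠ z') (hyz : y ≠ z) (hyz' : y ≠ z') :
    rCoef x y y' z z' * T y' z' * T x z * T x y
      = T y z * T x z' * T x y'
        + sCoef y y' z x * T y' z * T x z' * T x y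
        + (sCoef z z' x y)⁻¹ * T y z' * T x z * T x y' := by
  set E : ℂ → ℂ → ℂ := fun u v => (v - u) * T u v with hE
  have h₁ : E x y * E z z' - E x z * E y z' + E x z' * E y z = 0 := hT x hx y hy z hz z' hz'
  have h₂ : E x y' * E z z' - E x z * E y' z' + E x z' * E y' z = 0 :=
    hT x hx y' hy' z hz z' hz'
  have t₀ : rCoef x y y' z z' * T y' z' * T x z * T x y
      = E y' z' * E x z * E x y / ((y - z) * (x - y') * (x - z')) := by
    simp only [rCoef, hE]
    field_simp
    ring
  have t₁ : T y z * T x z' * T x y'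
      = -(E y z * E x z' * E x y') / ((y - z) * (x - y') * (x - z')) := by
    simp only [hE]
    field_simp
    ring
  have t₂ : sCoef y y' z x * T y' z * T x z' * T x y
      = E y' z * E x z' * E x y / ((y - z) * (x - y') * (x - z')) := by
    simp only [sCoef, hE]
    field_simp
    ring
  have t₃ : (sCoef z z' x y)⁻¹ * T y z' * T x z * T x y'
      = E y z' * E x z * E x y' / ((y - z) * (x - y') * (x - z')) := by
    simp only [sCoef, hE]
    field_simp
    ring
  rw [t₀, t₁, t₂, t₃]
  field_simp
  linear_combination E x y' * h₁ - E x y * h₂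

theorem trilinear_equation {g : ℕ} {p q : Fin g → ℂ} (hq : Function.Injective q)
    {X Y Y' Z Z' : ℕ → ℂ} {I : ℕ → ℕ → ℕ → Fin g → ℂ}
    (hI₂ : ∀ a b c k,
      I a (b + 1) c k = I a b c k * (sig (p k) (q k) (Y' b) / sig (p k) (q k) (Y b)))
    (hI₃ : ∀ a b c k,
      I a b (c + 1) k = I a b c k * (sig (p k) (q k) (Z' c) / sig (p k) (q k) (Z c)))
    {τ₁ τ₂ τ₃ : ℕ → ℕ → ℕ → ℂ}
    (hτ₁ : ∀ a b c, τ₁ a b c = Hdet p q fun k => I a b c k / sig (p k) (q k) (X a))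
    (hτ₂ : ∀ a b c, τ₂ a b c = Hdet p q fun k => I a b c k / sig (p k) (q k) (Y b))
    (hτ₃ : ∀ a b c, τ₃ a b c = Hdet p q fun k => I a b c k / sig (p k) (q k) (Z c))
    {a b c : ℕ} (hX : ∀ k, X a ≠ p k ∧ X a ≠ q k) (hY : ∀ k, Y b ≠ p k ∧ Y b ≠ q k)
    (hZ : ∀ k, Z c ≠ p k ∧ Z c ≠ q k) (hY' : ∀ k, Y' b ≠ q k) (hZ' : ∀ k, Z' c ≠ q k)
    (hXY : X a ≠ Y b) (hXY' : X a ≠ Y' b) (hXZ : X a ≠ Z c) (hXZ' : X a ≠ Z' c)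
    (hYZ : Y b ≠ Z c) (hYZ' : Y b ≠ Z' c) :
    rCoef (X a) (Y b) (Y' b) (Z c) (Z' c) * τ₁ a (b+1) (c+1) * τ₂ a b c * τ₃ a b c
      = τ₁ a b c * τ₂ a b (c+1) * τ₃ a (b+1) c
        + sCoef (Y b) (Y' b) (Z c) (X a) * τ₁ a (b+1) c * τ₂ a b (c+1) * τ₃ a b c
        + (sCoef (Z c) (Z' c) (X a) (Y b))⁻¹ * τ₁ a b (c+1) * τ₂ a b c * τ₃ a (b+1) c := by
  have hσ : ∀ {w : ℂ}, (∀ k, w ≠ p k ∧ w ≠ q k) → ∀ k, sig (p k) (q k) w ≠ 0 := fun hw k =>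
    div_ne_zero (sub_ne_zero.2 (hw k).1.symm) (sub_ne_zero.2 (hw k).2.symm)
  set amp : Fin g → ℂ := fun k => I a b c k
    / (sig (p k) (q k) (X a) * sig (p k) (q k) (Y b) * sig (p k) (q k) (Z c))
  obtain ⟨e₁, e₂, e₃, e₄, e₅, e₆, e₇, e₈⟩ :
      τ₁ a (b+1) (c+1) = twoPointTau p q amp (Y' b) (Z' c) ∧
      τ₂ a b c = twoPointTau p q amp (X a) (Z c) ∧ τ₃ a b c = twoPointTau p q amp (X a) (Y b) ∧
      τ₁ a b c = twoPointTau p q amp (Y b) (Z c) ∧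
      τ₂ a b (c+1) = twoPointTau p q amp (X a) (Z' c) ∧
      τ₃ a (b+1) c = twoPointTau p q amp (X a) (Y' b) ∧
      τ₁ a (b+1) c = twoPointTau p q amp (Y' b) (Z c) ∧
      τ₁ a b (c+1) = twoPointTau p q amp (Y b) (Z' c) := by
    refine ⟨?_, ?_, ?_, ?_, ?_, ?_, ?_, ?_⟩ <;>
    · simp only [hτ₁, hτ₂, hτ₃, twoPointTau]
      congr 1
      funext k
      have hσX := hσ hX k
      have hσY := hσ hY k
      have hσZ := hσ hZ k
      simp only [amp, hI₂, hI₃]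
      field_simp
  rw [e₁, e₂, e₃, e₄, e₅, e₆, e₇, e₈]
  exact trilinear_of_isPluckerOn (twoPointTau_isPluckerOn p q amp hq)
    (fun k => (hX k).2.symm) (fun k => (hY k).2.symm) (fun k => (hY' k).symm)
    (fun k => (hZ k).2.symm) (fun k => (hZ' k).symm) hXY hXY' hXZ hXZ' hYZ hYZ'

theorem statement7_general (g : ℕ) (p q : Fin g → ℂ)
    (hq : ∀ i j : Fin g, i ≠ j → q i ≠ q j)
    (X X' Y Y' Z Z' : ℕ → ℂ) (f : Fin g → ℂ)
    (havoid : ∀ (m : ℕ) (k : Fin g),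
      X m ≠ p k ∧ X m ≠ q k ∧ X' m ≠ p k ∧ X' m ≠ q k ∧
      Y m ≠ p k ∧ Y m ≠ q k ∧ Y' m ≠ p k ∧ Y' m ≠ q k ∧
      Z m ≠ p k ∧ Z m ≠ q k ∧ Z' m ≠ p k ∧ Z' m ≠ q k)
    (hdist : ∀ n₁ n₂ n₃ : ℕ,
      ([X n₁, X' n₁, Y n₂, Y' n₂, Z n₃, Z' n₃] : List ℂ).Pairwise (· ≠ ·))
    (I : ℕ → ℕ → ℕ → Fin g → ℂ)
    (hI : ∀ n₁ n₂ n₃ k, I n₁ n₂ n₃ k =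
      f k * (∏ m ∈ Finset.range n₁, sig (p k) (q k) (X' m) / sig (p k) (q k) (X m))
          * (∏ m ∈ Finset.range n₂, sig (p k) (q k) (Y' m) / sig (p k) (q k) (Y m))
          * (∏ m ∈ Finset.range n₃, sig (p k) (q k) (Z' m) / sig (p k) (q k) (Z m)))
    (τ₁ τ₂ τ₃ : ℕ → ℕ → ℕ → ℂ)
    (hτ₁ : ∀ n₁ n₂ n₃, τ₁ n₁ n₂ n₃ =
      Hdet p q (fun k => I n₁ n₂ n₃ k / sig (p k) (q k) (X n₁)))
    (hτ₂ : ∀ n₁ n₂ n₃, τ₂ n₁ n₂ n₃ =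
      Hdet p q (fun k => I n₁ n₂ n₃ k / sig (p k) (q k) (Y n₂)))
    (hτ₃ : ∀ n₁ n₂ n₃, τ₃ n₁ n₂ n₃ =
      Hdet p q (fun k => I n₁ n₂ n₃ k / sig (p k) (q k) (Z n₃))) :
    ∀ n₁ n₂ n₃ : ℕ,
      -- (α,β,γ) = (1,2,3)
      (rCoef (X n₁) (Y n₂) (Y' n₂) (Z n₃) (Z' n₃)
          * τ₁ n₁ (n₂+1) (n₃+1) * τ₂ n₁ n₂ n₃ * τ₃ n₁ n₂ n₃
        = τ₁ n₁ n₂ n₃ * τ₂ n₁ n₂ (n₃+1) * τ₃ n₁ (n₂+1) n₃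
          + sCoef (Y n₂) (Y' n₂) (Z n₃) (X n₁)
            * τ₁ n₁ (n₂+1) n₃ * τ₂ n₁ n₂ (n₃+1) * τ₃ n₁ n₂ n₃
          + (sCoef (Z n₃) (Z' n₃) (X n₁) (Y n₂))⁻¹
            * τ₁ n₁ n₂ (n₃+1) * τ₂ n₁ n₂ n₃ * τ₃ n₁ (n₂+1) n₃) ∧
      -- (α,β,γ) = (2,3,1)
      (rCoef (Y n₂) (Z n₃) (Z' n₃) (X n₁) (X' n₁)
          * τ₂ (n₁+1) n₂ (n₃+1) * τ₃ n₁ n₂ n₃ * τ₁ n₁ n₂ n₃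
        = τ₂ n₁ n₂ n₃ * τ₃ (n₁+1) n₂ n₃ * τ₁ n₁ n₂ (n₃+1)
          + sCoef (Z n₃) (Z' n₃) (X n₁) (Y n₂)
            * τ₂ n₁ n₂ (n₃+1) * τ₃ (n₁+1) n₂ n₃ * τ₁ n₁ n₂ n₃
          + (sCoef (X n₁) (X' n₁) (Y n₂) (Z n₃))⁻¹
            * τ₂ (n₁+1) n₂ n₃ * τ₃ n₁ n₂ n₃ * τ₁ n₁ n₂ (n₃+1)) ∧
      -- (α,β,γ) = (3,1,2)
      (rCoef (Z n₃) (X n₁) (X' n₁) (Y n₂) (Y' n₂)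
          * τ₃ (n₁+1) (n₂+1) n₃ * τ₁ n₁ n₂ n₃ * τ₂ n₁ n₂ n₃
        = τ₃ n₁ n₂ n₃ * τ₁ n₁ (n₂+1) n₃ * τ₂ (n₁+1) n₂ n₃
          + sCoef (X n₁) (X' n₁) (Y n₂) (Z n₃)
            * τ₃ (n₁+1) n₂ n₃ * τ₁ n₁ (n₂+1) n₃ * τ₂ n₁ n₂ n₃
          + (sCoef (Y n₂) (Y' n₂) (Z n₃) (X n₁))⁻¹
            * τ₃ n₁ (n₂+1) n₃ * τ₁ n₁ n₂ n₃ * τ₂ (n₁+1) n₂ n₃) := by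
  have hq' : Function.Injective q := Function.injective_iff_pairwise_ne.2 hq
  have hX : ∀ m k, X m ≠ p k ∧ X m ≠ q k := fun m k => by have := havoid m k; tauto
  have hY : ∀ m k, Y m ≠ p k ∧ Y m ≠ q k := fun m k => by have := havoid m k; tauto
  have hZ : ∀ m k, Z m ≠ p k ∧ Z m ≠ q k := fun m k => by have := havoid m k; tauto
  have hX' : ∀ m k, X' m ≠ q k := fun m k => (havoid m k).2.2.2.1
  have hY' : ∀ m k, Y' m ≠ q k := fun m k => by have := havoid m k; tauto
  have hZ' : ∀ m k, Z' m ≠ q k := fun m k => by have := havoid m k; tauto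
  have hI₁ : ∀ a b c k,
      I (a + 1) b c k = I a b c k * (sig (p k) (q k) (X' a) / sig (p k) (q k) (X a)) :=
    fun a b c k => by simp only [hI, Finset.prod_range_succ]; ring
  have hI₂ : ∀ a b c k,
      I a (b + 1) c k = I a b c k * (sig (p k) (q k) (Y' b) / sig (p k) (q k) (Y b)) :=
    fun a b c k => by simp only [hI, Finset.prod_range_succ]; ring
  have hI₃ : ∀ a b c k,
      I a b (c + 1) k = I a b c k * (sig (p k) (q k) (Z' c) / sig (p k) (q k) (Z c)) :=
    fun a b c k => by simp only [hI, Finset.prod_range_succ]; ring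
  intro n₁ n₂ n₃
  have hd := hdist n₁ n₂ n₃
  simp only [List.pairwise_cons, List.mem_cons, List.not_mem_nil, forall_eq_or_imp, forall_eq,
    List.Pairwise.nil, and_true, or_false] at hd
  obtain ⟨⟨-, hXY, hXY', hXZ, hXZ'⟩, ⟨hX'Y, -, hX'Z, -⟩, ⟨-, hYZ, hYZ'⟩, ⟨hY'Z, -⟩, -⟩ := hd
  exact ⟨trilinear_equation hq' hI₂ hI₃ hτ₁ hτ₂ hτ₃ (hX n₁) (hY n₂) (hZ n₃) (hY' n₂) (hZ' n₃)
      hXY hXY' hXZ hXZ' hYZ hYZ',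
    trilinear_equation hq' (I := fun a b c => I c a b) (fun a b c => hI₃ c a b)
      (fun a b c => hI₁ c a b) (fun a b c => hτ₂ c a b) (fun a b c => hτ₃ c a b)
      (fun a b c => hτ₁ c a b) (hY n₂) (hZ n₃) (hX n₁) (hZ' n₃) (hX' n₁)
      hYZ hYZ' hXY.symm hX'Y.symm hXZ.symm hX'Z.symm,
    trilinear_equation hq' (I := fun a b c => I b c a) (fun a b c => hI₁ b c a)
      (fun a b c => hI₂ b c a) (fun a b c => hτ₃ b c a) (fun a b c => hτ₁ b c a)
      (fun a b c => hτ₂ b c a) (hZ n₃) (hX n₁) (hY n₂) (hX' n₁) (hY' n₂)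
      hXZ.symm hX'Z.symm hYZ.symm hY'Z.symm hXY hXY'⟩

/-- Soliton solutions of the trilinear system: the triplet of
tau functions `τ₁(n) = H(I_{n,k}/σ_k(X_{n₁}))`, `τ₂(n) = H(I_{n,k}/σ_k(Y_{n₂}))`,
`τ₃(n) = H(I_{n,k}/σ_k(Z_{n₃}))` built from the amplitudes
`I_{n,k} = f_k ∏ σ_k(X′)/σ_k(X) ∏ σ_k(Y′)/σ_k(Y) ∏ σ_k(Z′)/σ_k(Z)` satisfies,
for every `n ∈ ℕ³` and every cyclic permutation `(α,β,γ)` of `(1,2,3)`, the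
trilinear equation with the corrected cross-ratio coefficients `r_α, s_α`. -/
theorem statement7 (g : ℕ) (hg : 1 ≤ g) (p q : Fin g → ℂ)
    (hq : ∀ i j : Fin g, i ≠ j → q i ≠ q j)
    (X X' Y Y' Z Z' : ℕ → ℂ) (f : Fin g → ℂ)
    (havoid : ∀ (m : ℕ) (k : Fin g),
      X m ≠ p k ∧ X m ≠ q k ∧ X' m ≠ p k ∧ X' m ≠ q k ∧
      Y m ≠ p k ∧ Y m ≠ q k ∧ Y' m ≠ p k ∧ Y' m ≠ q k ∧
      Z m ≠ p k ∧ Z m ≠ q k ∧ Z' m ≠ p k ∧ Z' m ≠ q k)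
    (hdist : ∀ n₁ n₂ n₃ : ℕ,
      ([X n₁, X' n₁, Y n₂, Y' n₂, Z n₃, Z' n₃] : List ℂ).Pairwise (· ≠ ·))
    (I : ℕ → ℕ → ℕ → Fin g → ℂ)
    (hI : ∀ n₁ n₂ n₃ k, I n₁ n₂ n₃ k =
      f k * (∏ m ∈ Finset.range n₁, sig (p k) (q k) (X' m) / sig (p k) (q k) (X m))
          * (∏ m ∈ Finset.range n₂, sig (p k) (q k) (Y' m) / sig (p k) (q k) (Y m))
          * (∏ m ∈ Finset.range n₃, sig (p k) (q k) (Z' m) / sig (p k) (q k) (Z m)))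
    (τ₁ τ₂ τ₃ : ℕ → ℕ → ℕ → ℂ)
    (hτ₁ : ∀ n₁ n₂ n₃, τ₁ n₁ n₂ n₃ =
      Hdet p q (fun k => I n₁ n₂ n₃ k / sig (p k) (q k) (X n₁)))
    (hτ₂ : ∀ n₁ n₂ n₃, τ₂ n₁ n₂ n₃ =
      Hdet p q (fun k => I n₁ n₂ n₃ k / sig (p k) (q k) (Y n₂)))
    (hτ₃ : ∀ n₁ n₂ n₃, τ₃ n₁ n₂ n₃ =
      Hdet p q (fun k => I n₁ n₂ n₃ k / sig (p k) (q k) (Z n₃))) :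
    ∀ n₁ n₂ n₃ : ℕ,
      -- (α,β,γ) = (1,2,3)
      (rCoef (X n₁) (Y n₂) (Y' n₂) (Z n₃) (Z' n₃)
          * τ₁ n₁ (n₂+1) (n₃+1) * τ₂ n₁ n₂ n₃ * τ₃ n₁ n₂ n₃
        = τ₁ n₁ n₂ n₃ * τ₂ n₁ n₂ (n₃+1) * τ₃ n₁ (n₂+1) n₃
          + sCoef (Y n₂) (Y' n₂) (Z n₃) (X n₁)
            * τ₁ n₁ (n₂+1) n₃ * τ₂ n₁ n₂ (n₃+1) * τ₃ n₁ n₂ n₃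
          + (sCoef (Z n₃) (Z' n₃) (X n₁) (Y n₂))⁻¹
            * τ₁ n₁ n₂ (n₃+1) * τ₂ n₁ n₂ n₃ * τ₃ n₁ (n₂+1) n₃) ∧
      -- (α,β,γ) = (2,3,1)
      (rCoef (Y n₂) (Z n₃) (Z' n₃) (X n₁) (X' n₁)
          * τ₂ (n₁+1) n₂ (n₃+1) * τ₃ n₁ n₂ n₃ * τ₁ n₁ n₂ n₃
        = τ₂ n₁ n₂ n₃ * τ₃ (n₁+1) n₂ n₃ * τ₁ n₁ n₂ (n₃+1)
          + sCoef (Z n₃) (Z' n₃) (X n₁) (Y n₂)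
            * τ₂ n₁ n₂ (n₃+1) * τ₃ (n₁+1) n₂ n₃ * τ₁ n₁ n₂ n₃
          + (sCoef (X n₁) (X' n₁) (Y n₂) (Z n₃))⁻¹
            * τ₂ (n₁+1) n₂ n₃ * τ₃ n₁ n₂ n₃ * τ₁ n₁ n₂ (n₃+1)) ∧
      -- (α,β,γ) = (3,1,2)
      (rCoef (Z n₃) (X n₁) (X' n₁) (Y n₂) (Y' n₂)
          * τ₃ (n₁+1) (n₂+1) n₃ * τ₁ n₁ n₂ n₃ * τ₂ n₁ n₂ n₃
        = τ₃ n₁ n₂ n₃ * τ₁ n₁ (n₂+1) n₃ * τ₂ (n₁+1) n₂ n₃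
          + sCoef (X n₁) (X' n₁) (Y n₂) (Z n₃)
            * τ₃ (n₁+1) n₂ n₃ * τ₁ n₁ (n₂+1) n₃ * τ₂ n₁ n₂ n₃
          + (sCoef (Y n₂) (Y' n₂) (Z n₃) (X n₁))⁻¹
            * τ₃ n₁ (n₂+1) n₃ * τ₁ n₁ n₂ n₃ * τ₂ (n₁+1) n₂ n₃) :=
  statement7_general g p q hq X X' Y Y' Z Z' f havoid hdist I hI τ₁ τ₂ τ₃ hτ₁ hτ₂ hτ₃
end

section
/- Let X₁, X′₁, X₂, X′₂, X₃, X′₃ be six pairwise distinct complex numbers. Then for every cyclic permutation (α,β,γ) of (1,2,3), the coefficient identity r_α = 1 + s_β + s_γ⁻¹ holds, where r_α and s_α are given by the corrected cross-ratio formulas. (This is the identity expressing that the constant functions τ₁ = τ₂ = τ₃ = 1 solve the trilinear system, i.e. the genus zero case of the soliton solutions.) -/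

lemma key (a b b' c c' : ℂ) (hab : a ≠ b) (hac : a ≠ c) (hab' : a ≠ b')
    (hac' : a ≠ c') (hbc : b ≠ c) (hbc' : b ≠ c') (hb'c : b' ≠ c) :
    rCoef a b b' c c' = 1 + sCoef b b' c a + (sCoef c c' a b)⁻¹ := by
  unfold rCoef sCoef
  have h1 : b - c ≠ 0 := sub_ne_zero.mpr hbc
  have h2 : a - b' ≠ 0 := sub_ne_zero.mpr hab'
  have h3 : a - c' ≠ 0 := sub_ne_zero.mpr hac'
  have h4 : b' - a ≠ 0 := sub_ne_zero.mpr (Ne.symm hab')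
  have h5 : c - a ≠ 0 := sub_ne_zero.mpr (Ne.symm hac)
  have h6 : c' - b ≠ 0 := sub_ne_zero.mpr (Ne.symm hbc')
  have h7 : c - b ≠ 0 := sub_ne_zero.mpr (Ne.symm hbc)
  have h8 : c' - a ≠ 0 := sub_ne_zero.mpr (Ne.symm hac')
  have h9 : a - b ≠ 0 := sub_ne_zero.mpr hab
  field_simp
  ring

/-- For six pairwise distinct complex numbers
`X₁, X′₁, X₂, X′₂, X₃, X′₃` and every cyclic permutation `(α,β,γ)` of
`(1,2,3)`, the identity `r_α = 1 + s_β + s_γ⁻¹` holds (the genus zero case of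
the soliton solutions: the constants `τ₁ = τ₂ = τ₃ = 1` solve the trilinear
system). -/
theorem statement8 (X₁ X₁' X₂ X₂' X₃ X₃' : ℂ)
    (hdist : ([X₁, X₁', X₂, X₂', X₃, X₃'] : List ℂ).Pairwise (· ≠ ·)) :
    rCoef X₁ X₂ X₂' X₃ X₃' = 1 + sCoef X₂ X₂' X₃ X₁ + (sCoef X₃ X₃' X₁ X₂)⁻¹ ∧
    rCoef X₂ X₃ X₃' X₁ X₁' = 1 + sCoef X₃ X₃' X₁ X₂ + (sCoef X₁ X₁' X₂ X₃)⁻¹ ∧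
    rCoef X₃ X₁ X₁' X₂ X₂' = 1 + sCoef X₁ X₁' X₂ X₃ + (sCoef X₂ X₂' X₃ X₁)⁻¹ := by
  simp only [List.pairwise_cons, List.mem_cons, List.not_mem_nil, or_false,
    forall_eq_or_imp, forall_eq, List.Pairwise.nil, and_true] at hdist
  obtain ⟨⟨d1, d2, d3, d4, d5⟩, ⟨e1, e2, e3, e4⟩, ⟨f1, f2, f3⟩, ⟨g1, g2⟩, k1⟩ := hdist
  exact ⟨key _ _ _ _ _ d2 d4 d3 d5 f2 f3 g1,
    key _ _ _ _ _ f2 d2.symm f3 e1.symm d4.symm e3.symm d5.symm,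
    key _ _ _ _ _ d4.symm f2.symm e3.symm g1.symm d2 d3 e1⟩
end

section
/- One-soliton solution: let X, q ∈ ℂ and F ∈ ℂ, and let Y, Y′, Z, Z′ : ℕ → ℂ be sequences such that for all n₂, n₃ the five numbers X, Y_{n₂}, Y′_{n₂}, Z_{n₃}, Z′_{n₃} are pairwise distinct and all differ from q. Put σ(z) = (X − z)/(q − z) and τ(n₂,n₃) = 1 − F · ∏_{m₂=0}^{n₂−1} σ(Y′_{m₂})/σ(Y_{m₂}) · ∏_{m₃=0}^{n₃−1} σ(Z′_{m₃})/σ(Z_{m₃}). Then for all n₂, n₃ ≥ 0 the linear difference equation r₁ · τ(n₂+1, n₃+1) = τ(n₂, n₃) + s₂ · τ(n₂+1, n₃) + s₃⁻¹ · τ(n₂, n₃+1) holds, where r₁, s₂, s₃ are the corrected cross-ratio coefficients built from X₁ = X, X₂ = Y_{n₂}, X′₂ = Y′_{n₂}, X₃ = Z_{n₃}, X′₃ = Z′_{n₃} (these three coefficients do not involve X′₁). Equivalently, τ solves the trilinear equation for (α,β,γ) = (1,2,3) with τ₂ ≡ τ₃ ≡ 1. -/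
set_option maxHeartbeats 1000000 in
/-- The generic cross-ratio identity `r = 1 + s₂ + s₃⁻¹` (with the inverse of
`s₃` written out explicitly), for an arbitrary base point `W`. -/
lemma crossId (W y y' z z' : ℂ)
    (d6 : y - z ≠ 0) (d2 : W - y' ≠ 0) (d4 : W - z' ≠ 0)
    (d2' : y' - W ≠ 0) (d6' : z - y ≠ 0) (d4' : z' - W ≠ 0) :
    -((y' - z') * (W - y) * (W - z)) / ((y - z) * (W - y') * (W - z'))
      = 1 + -((y - W) * (y' - z)) / ((y - z) * (y' - W))
        + -(((z - W) * (z' - y)) / ((z - y) * (z' - W))) := by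
  field_simp
  ring

set_option maxHeartbeats 1000000 in
lemma key_s9 (X q P y y' z z' : ℂ)
    (h1 : X ≠ y) (h2 : X ≠ y') (h3 : X ≠ z) (h4 : X ≠ z')
    (h5 : y ≠ y') (h6 : y ≠ z) (h7 : y ≠ z') (h8 : y' ≠ z) (h9 : y' ≠ z')
    (h10 : z ≠ z')
    (hXq : X ≠ q) (hyq : y ≠ q) (hy'q : y' ≠ q) (hzq : z ≠ q) (hz'q : z' ≠ q) :
    rCoef X y y' z z' *
        (1 - P * (((X - y') / (q - y')) / ((X - y) / (q - y))) *
             (((X - z') / (q - z')) / ((X - z) / (q - z))))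
      = (1 - P) + sCoef y y' z X *
          (1 - P * (((X - y') / (q - y')) / ((X - y) / (q - y))))
        + (sCoef z z' X y)⁻¹ *
          (1 - P * (((X - z') / (q - z')) / ((X - z) / (q - z)))) := by
  have d1 : X - y ≠ 0 := sub_ne_zero.mpr h1
  have d2 : X - y' ≠ 0 := sub_ne_zero.mpr h2
  have d3 : X - z ≠ 0 := sub_ne_zero.mpr h3
  have d4 : X - z' ≠ 0 := sub_ne_zero.mpr h4
  have d6 : y - z ≠ 0 := sub_ne_zero.mpr h6
  have e1 : q - y ≠ 0 := sub_ne_zero.mpr (Ne.symm hyq)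
  have e2 : q - y' ≠ 0 := sub_ne_zero.mpr (Ne.symm hy'q)
  have e3 : q - z ≠ 0 := sub_ne_zero.mpr (Ne.symm hzq)
  have e4 : q - z' ≠ 0 := sub_ne_zero.mpr (Ne.symm hz'q)
  have d2' : y' - X ≠ 0 := sub_ne_zero.mpr h2.symm
  have d4' : z' - X ≠ 0 := sub_ne_zero.mpr h4.symm
  have d6' : z - y ≠ 0 := sub_ne_zero.mpr h6.symm
  have e2' : y' - q ≠ 0 := sub_ne_zero.mpr hy'q
  have e4' : z' - q ≠ 0 := sub_ne_zero.mpr hz'q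
  have hinv : (sCoef z z' X y)⁻¹
      = -(((z - X) * (z' - y)) / ((z - y) * (z' - X))) := by
    unfold sCoef; rw [neg_div, inv_neg, inv_div]
  rw [hinv]
  unfold rCoef sCoef
  have hu : ((X - y') / (q - y')) / ((X - y) / (q - y))
      = ((X - y') * (q - y)) / ((q - y') * (X - y)) := by
    field_simp
  have hv : ((X - z') / (q - z')) / ((X - z) / (q - z))
      = ((X - z') * (q - z)) / ((q - z') * (X - z)) := by
    field_simp
  rw [hu, hv]
  have keyX := crossId X y y' z z' d6 d2 d4 d2' d6' d4'
  have keyq := crossId q y y' z z' d6 e2 e4 e2' d6' e4'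
  have hA : -((y' - z') * (X - y) * (X - z)) / ((y - z) * (X - y') * (X - z'))
        * (((X - y') * (q - y)) / ((q - y') * (X - y)))
      = -((y' - z') * (q - y) * (X - z)) / ((y - z) * (q - y') * (X - z')) := by
    field_simp
  have hB : -((y' - z') * (q - y) * (X - z)) / ((y - z) * (q - y') * (X - z'))
        * (((X - z') * (q - z)) / ((q - z') * (X - z)))
      = -((y' - z') * (q - y) * (q - z)) / ((y - z) * (q - y') * (q - z')) := by
    field_simp
  have hC : -((y - X) * (y' - z)) / ((y - z) * (y' - X))
        * (((X - y') * (q - y)) / ((q - y') * (X - y)))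
      = -((y - q) * (y' - z)) / ((y - z) * (y' - q)) := by
    field_simp
    ring
  have hD : -(((z - X) * (z' - y)) / ((z - y) * (z' - X)))
        * (((X - z') * (q - z)) / ((q - z') * (X - z)))
      = -(((z - q) * (z' - y)) / ((z - y) * (z' - q))) := by
    field_simp
    ring
  have key2 : -((y' - z') * (X - y) * (X - z)) / ((y - z) * (X - y') * (X - z'))
        * (((X - y') * (q - y)) / ((q - y') * (X - y)))
        * (((X - z') * (q - z)) / ((q - z') * (X - z)))
      = 1 + -((y - X) * (y' - z)) / ((y - z) * (y' - X))
            * (((X - y') * (q - y)) / ((q - y') * (X - y)))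
        + -(((z - X) * (z' - y)) / ((z - y) * (z' - X)))
            * (((X - z') * (q - z)) / ((q - z') * (X - z))) := by
    rw [hA, hB, keyq, hC, hD]
  linear_combination keyX - P * key2

/-- The one-soliton function
`τ(n₂,n₃) = 1 − F·∏ σ(Y′)/σ(Y) · ∏ σ(Z′)/σ(Z)` with `σ(z) = (X−z)/(q−z)`
satisfies the linear difference equation
`r₁ τ(n₂+1,n₃+1) = τ(n₂,n₃) + s₂ τ(n₂+1,n₃) + s₃⁻¹ τ(n₂,n₃+1)`,
where `r₁, s₂, s₃` are the corrected cross-ratio coefficients built from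
`X₁ = X, X₂ = Y_{n₂}, X′₂ = Y′_{n₂}, X₃ = Z_{n₃}, X′₃ = Z′_{n₃}`. -/
theorem statement9 (X q F : ℂ) (Y Y' Z Z' : ℕ → ℂ)
    (hdist : ∀ n₂ n₃ : ℕ,
      ([X, Y n₂, Y' n₂, Z n₃, Z' n₃] : List ℂ).Pairwise (· ≠ ·))
    (hq : ∀ n₂ n₃ : ℕ,
      X ≠ q ∧ Y n₂ ≠ q ∧ Y' n₂ ≠ q ∧ Z n₃ ≠ q ∧ Z' n₃ ≠ q)
    (σ : ℂ → ℂ) (hσ : ∀ z, σ z = (X - z) / (q - z))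
    (τ : ℕ → ℕ → ℂ)
    (hτ : ∀ n₂ n₃ : ℕ, τ n₂ n₃ =
      1 - F * (∏ m ∈ Finset.range n₂, σ (Y' m) / σ (Y m))
            * (∏ m ∈ Finset.range n₃, σ (Z' m) / σ (Z m))) :
    ∀ n₂ n₃ : ℕ,
      rCoef X (Y n₂) (Y' n₂) (Z n₃) (Z' n₃) * τ (n₂+1) (n₃+1)
        = τ n₂ n₃ + sCoef (Y n₂) (Y' n₂) (Z n₃) X * τ (n₂+1) n₃
          + (sCoef (Z n₃) (Z' n₃) X (Y n₂))⁻¹ * τ n₂ (n₃+1) := by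
  intro n₂ n₃
  obtain ⟨hXq, hyq, hy'q, hzq, hz'q⟩ := hq n₂ n₃
  have hd := hdist n₂ n₃
  simp at hd
  obtain ⟨⟨h1, h2, h3, h4⟩, ⟨h5, h6, h7⟩, ⟨h8, h9⟩, h10⟩ := hd
  set P := F * (∏ m ∈ Finset.range n₂, σ (Y' m) / σ (Y m))
            * (∏ m ∈ Finset.range n₃, σ (Z' m) / σ (Z m)) with hP
  have hτ00 : τ n₂ n₃ = 1 - P := hτ n₂ n₃
  have hτ10 : τ (n₂+1) n₃ = 1 - P * (σ (Y' n₂) / σ (Y n₂)) := by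
    rw [hτ, Finset.prod_range_succ, hP]; ring
  have hτ01 : τ n₂ (n₃+1) = 1 - P * (σ (Z' n₃) / σ (Z n₃)) := by
    rw [hτ, Finset.prod_range_succ, hP]; ring
  have hτ11 : τ (n₂+1) (n₃+1) =
      1 - P * (σ (Y' n₂) / σ (Y n₂)) * (σ (Z' n₃) / σ (Z n₃)) := by
    rw [hτ, Finset.prod_range_succ, Finset.prod_range_succ, hP]; ring
  rw [hτ00, hτ10, hτ01, hτ11, hσ, hσ, hσ, hσ]
  exact key_s9 X q P (Y n₂) (Y' n₂) (Z n₃) (Z' n₃) h1 h2 h3 h4 h5 h6 h7 h8 h9 h10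
    hXq hyq hy'q hzq hz'q
end

section
/- Let N₁ ≥ N₂ ≥ N₃ ≥ 1 be integers. The number of interior integer points of the Newton polygon Π, i.e. the cardinality of {(a,b) ∈ ℤ × ℤ : 0 < a < N₂ + N₃, 0 < b < N₁ + N₃, −N₁ < a − b < N₂}, equals N₁N₂ + N₁N₃ + N₂N₃ − (N₁ + N₂ + N₃) + 1. (This is the genus of the generic spectral curve of the open cubic lattice of size N₁ × N₂ × N₃, computed as the number of interior lattice points of its Newton polygon.) -/
lemma sumA' (m : ℕ) : 2 * ∑ a ∈ Finset.Ioc (0:ℤ) (m:ℤ), a = m * (m + 1) := by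
  induction m with
  | zero => simp
  | succ k ih =>
      have hins : Finset.Ioc (0:ℤ) ((k:ℤ)+1) = insert ((k:ℤ)+1) (Finset.Ioc 0 (k:ℤ)) := by
        ext x; simp; omega
      push_cast
      rw [hins, Finset.sum_insert (by simp)]
      push_cast at ih
      linear_combination ih

lemma sumA (n : ℤ) (h : 0 ≤ n) : 2 * ∑ a ∈ Finset.Ioc (0:ℤ) n, a = n * (n + 1) := by
  obtain ⟨m, rfl⟩ := Int.eq_ofNat_of_zero_le h
  exact sumA' m

lemma sumB' (c : ℤ) (hc : 0 ≤ c) (m : ℕ) :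
    2 * ∑ a ∈ Finset.Ioc (0:ℤ) ((m:ℤ)+c), min c a = c * (c + 1) + 2 * c * (((m:ℤ)+c) - c) := by
  induction m with
  | zero =>
      simp only [Nat.cast_zero, zero_add]
      rw [Finset.sum_congr rfl (fun a ha => by
        simp only [Finset.mem_Ioc] at ha
        exact min_eq_right ha.2)]
      rw [sumA c hc]; ring
  | succ k ih =>
      have hins : Finset.Ioc (0:ℤ) ((k:ℤ)+1+c) = insert ((k:ℤ)+1+c) (Finset.Ioc 0 ((k:ℤ)+c)) := by
        ext x; simp; omega
      push_cast
      rw [hins, Finset.sum_insert (by simp)]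
      have hm : min c ((k:ℤ)+1+c) = c := min_eq_left (by omega)
      rw [hm]
      linear_combination ih

lemma sumB (c : ℤ) (hc : 0 ≤ c) (n : ℤ) (h : c ≤ n) :
    2 * ∑ a ∈ Finset.Ioc (0:ℤ) n, min c a = c * (c + 1) + 2 * c * (n - c) := by
  obtain ⟨m, hm⟩ := Int.eq_ofNat_of_zero_le (sub_nonneg.mpr h)
  have hn : n = (m:ℤ) + c := by omega
  rw [hn]
  exact sumB' c hc m

/-- For integers `N₁ ≥ N₂ ≥ N₃ ≥ 1`, the number of interior
integer points of the Newton polygon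
`Π = {(a,b) : 0 ≤ a ≤ N₂+N₃, 0 ≤ b ≤ N₁+N₃, −N₁ ≤ a−b ≤ N₂}`
equals `N₁N₂ + N₁N₃ + N₂N₃ − (N₁+N₂+N₃) + 1`. -/
theorem statement10 (N₁ N₂ N₃ : ℤ) (h21 : N₂ ≤ N₁) (h32 : N₃ ≤ N₂) (h3 : 1 ≤ N₃) :
    ((((Finset.Ioo (0:ℤ) (N₂ + N₃)) ×ˢ (Finset.Ioo (0:ℤ) (N₁ + N₃))).filter
        (fun p => -N₁ < p.1 - p.2 ∧ p.1 - p.2 < N₂)).card : ℤ)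
      = N₁ * N₂ + N₁ * N₃ + N₂ * N₃ - (N₁ + N₂ + N₃) + 1 := by
  have step1 : (((Finset.Ioo (0:ℤ) (N₂ + N₃)) ×ˢ (Finset.Ioo (0:ℤ) (N₁ + N₃))).filter
        (fun p => -N₁ < p.1 - p.2 ∧ p.1 - p.2 < N₂)).card
      = ∑ a ∈ Finset.Ioo (0:ℤ) (N₂ + N₃),
          ((Finset.Ioo (0:ℤ) (N₁ + N₃)).filter (fun b => -N₁ < a - b ∧ a - b < N₂)).card := by
    rw [Finset.card_filter, Finset.sum_product]
    refine Finset.sum_congr rfl fun a _ => ?_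
    rw [Finset.card_filter]
  rw [step1]
  push_cast
  rw [Finset.sum_congr rfl (fun a (ha : a ∈ Finset.Ioo (0:ℤ) (N₂+N₃)) => by
    simp only [Finset.mem_Ioo] at ha
    have hfe : (Finset.Ioo (0:ℤ) (N₁ + N₃)).filter (fun b => -N₁ < a - b ∧ a - b < N₂)
        = Finset.Ioo (max 0 (a - N₂)) (min (N₁ + N₃) (a + N₁)) := by
      ext b; simp only [Finset.mem_filter, Finset.mem_Ioo]; omega
    show (((Finset.Ioo (0:ℤ) (N₁ + N₃)).filter (fun b => -N₁ < a - b ∧ a - b < N₂)).card : ℤ)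
        = N₁ - 1 + min N₃ a + min N₂ a - a
    rw [hfe, Int.card_Ioo]
    omega)]
  have hset : Finset.Ioo (0:ℤ) (N₂ + N₃) = Finset.Ioc (0:ℤ) (N₂ + N₃ - 1) := by
    ext x; simp
  rw [hset]
  rw [Finset.sum_sub_distrib, Finset.sum_add_distrib, Finset.sum_add_distrib,
    Finset.sum_const, Int.card_Ioc, nsmul_eq_mul]
  have hA := sumA (N₂ + N₃ - 1) (by omega)
  have hB3 := sumB N₃ (by omega) (N₂ + N₃ - 1) (by omega)
  have hB2 := sumB N₂ (by omega) (N₂ + N₃ - 1) (by omega)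
  have hcast : ((N₂ + N₃ - 1 - 0).toNat : ℤ) = N₂ + N₃ - 1 := by omega
  rw [hcast]
  have h2 : 2 * ((N₂ + N₃ - 1) * (N₁ - 1) + ∑ x ∈ Finset.Ioc (0:ℤ) (N₂ + N₃ - 1), N₃ ⊓ x +
        ∑ x ∈ Finset.Ioc (0:ℤ) (N₂ + N₃ - 1), N₂ ⊓ x - ∑ x ∈ Finset.Ioc (0:ℤ) (N₂ + N₃ - 1), x)
      = 2 * (N₁ * N₂ + N₁ * N₃ + N₂ * N₃ - (N₁ + N₂ + N₃) + 1) := by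
    linear_combination hB3 + hB2 - hA
  linarith [h2]
end

section
/- Structure of the spectral determinant: let N₂, N₃ ≥ 1 be integers and let u_{n₂,n₃}, w_{n₂,n₃}, κ_{n₂,n₃} ∈ ℂ for 0 ≤ n₂ < N₂, 0 ≤ n₃ < N₃. For y ∈ ℂ* and z ∈ ℂ let L(y,z) be the (N₂N₃) × (N₂N₃) matrix of the quasi-periodic linear system described below. Then there exist complex numbers J_{a,b} for 0 ≤ a ≤ N₃ and 0 ≤ b ≤ N₂, depending only on the u's, w's, κ's (not on y, z), such that J_{0,0} = 1 and det L(y,z) = Σ_{a=0}^{N₃} Σ_{b=0}^{N₂} J_{a,b} · y^{−a} · z^{b} for all y ≠ 0 and all z. In particular, the spectral determinant is a Laurent polynomial in (y,z) of degree at most N₃ in y⁻¹ and at most N₂ in z, with normalized constant coefficient J_{0,0} = 1. -/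
open MvPolynomial Matrix

namespace Stmt11

lemma ite_split2 (P Q : Prop) [Decidable P] [Decidable Q] (x v : ℂ) :
    (if P then x * (if Q then v else 1) else 0)
      = (if P ∧ ¬Q then x else 0) + (if P ∧ Q then x else 0) * v := by
  by_cases hP : P <;> by_cases hQ : Q <;> simp [hP, hQ]

lemma ite_split4 (P Q R : Prop) [Decidable P] [Decidable Q] [Decidable R] (x s t : ℂ) :
    (if P then x * (if Q then s else 1) * (if R then t else 1) else 0)
      = (if P ∧ ¬Q ∧ ¬R then x else 0) + (if P ∧ Q ∧ ¬R then x else 0) * s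
        + (if P ∧ ¬Q ∧ R then x else 0) * t + (if P ∧ Q ∧ R then x else 0) * (s * t) := by
  by_cases hP : P <;> by_cases hQ : Q <;> by_cases hR : R <;> simp [hP, hQ, hR, mul_assoc]

variable (N₂ N₃ : ℕ) (u w κ : Fin N₂ → Fin N₃ → ℂ)

def A0 (r c : Fin N₂ × Fin N₃) : ℂ :=
  (if c = r then (1 : ℂ) else 0)
  + (if (c.1 = r.1 ∧ (c.2 : ℕ) = ((r.2 : ℕ) + 1) % N₃) ∧ ¬((r.2 : ℕ) + 1 = N₃) then
      -(u r.1 r.2) else 0)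
  + (if ((r.1 : ℕ) = ((c.1 : ℕ) + 1) % N₂ ∧ c.2 = r.2) ∧ ¬((r.1 : ℕ) = 0) then
      w r.1 r.2 else 0)
  + (if ((r.1 : ℕ) = ((c.1 : ℕ) + 1) % N₂ ∧ (c.2 : ℕ) = ((r.2 : ℕ) + 1) % N₃)
        ∧ ¬((r.1 : ℕ) = 0) ∧ ¬((r.2 : ℕ) + 1 = N₃) then
      κ r.1 r.2 * u r.1 r.2 * w r.1 r.2 else 0)

def A1 (r c : Fin N₂ × Fin N₃) : ℂ :=
  (if ((r.1 : ℕ) = ((c.1 : ℕ) + 1) % N₂ ∧ c.2 = r.2) ∧ (r.1 : ℕ) = 0 then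
      w r.1 r.2 else 0)
  + (if ((r.1 : ℕ) = ((c.1 : ℕ) + 1) % N₂ ∧ (c.2 : ℕ) = ((r.2 : ℕ) + 1) % N₃)
        ∧ (r.1 : ℕ) = 0 ∧ ¬((r.2 : ℕ) + 1 = N₃) then
      κ r.1 r.2 * u r.1 r.2 * w r.1 r.2 else 0)

def A2 (r c : Fin N₂ × Fin N₃) : ℂ :=
  (if (c.1 = r.1 ∧ (c.2 : ℕ) = ((r.2 : ℕ) + 1) % N₃) ∧ (r.2 : ℕ) + 1 = N₃ then
      -(u r.1 r.2) else 0)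
  + (if ((r.1 : ℕ) = ((c.1 : ℕ) + 1) % N₂ ∧ (c.2 : ℕ) = ((r.2 : ℕ) + 1) % N₃)
        ∧ ¬((r.1 : ℕ) = 0) ∧ (r.2 : ℕ) + 1 = N₃ then
      κ r.1 r.2 * u r.1 r.2 * w r.1 r.2 else 0)

def A3 (r c : Fin N₂ × Fin N₃) : ℂ :=
  (if ((r.1 : ℕ) = ((c.1 : ℕ) + 1) % N₂ ∧ (c.2 : ℕ) = ((r.2 : ℕ) + 1) % N₃)
        ∧ (r.1 : ℕ) = 0 ∧ (r.2 : ℕ) + 1 = N₃ then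
      κ r.1 r.2 * u r.1 r.2 * w r.1 r.2 else 0)

def Mmat (s t : ℂ) : Matrix (Fin N₂ × Fin N₃) (Fin N₂ × Fin N₃) ℂ :=
  Matrix.of fun r c =>
    A0 N₂ N₃ u w κ r c + A1 N₂ N₃ u w κ r c * s + A2 N₂ N₃ u w κ r c * t
      + A3 N₂ N₃ u w κ r c * (s * t)

lemma hsum (s t : ℂ) (r c : Fin N₂ × Fin N₃) :
    (if c = r then (1 : ℂ) else 0)
        + (if c.1 = r.1 ∧ (c.2 : ℕ) = ((r.2 : ℕ) + 1) % N₃ then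
            -(u r.1 r.2) * (if (r.2 : ℕ) + 1 = N₃ then t else 1) else 0)
        + (if (r.1 : ℕ) = ((c.1 : ℕ) + 1) % N₂ ∧ c.2 = r.2 then
            w r.1 r.2 * (if (r.1 : ℕ) = 0 then s else 1) else 0)
        + (if (r.1 : ℕ) = ((c.1 : ℕ) + 1) % N₂ ∧ (c.2 : ℕ) = ((r.2 : ℕ) + 1) % N₃ then
            κ r.1 r.2 * u r.1 r.2 * w r.1 r.2
              * (if (r.1 : ℕ) = 0 then s else 1)
              * (if (r.2 : ℕ) + 1 = N₃ then t else 1) else 0)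
      = Mmat N₂ N₃ u w κ s t r c := by
  rw [ite_split2 _ _ (-(u r.1 r.2)) t, ite_split2 _ _ (w r.1 r.2) s,
    ite_split4 _ _ _ (κ r.1 r.2 * u r.1 r.2 * w r.1 r.2) s t]
  simp only [Mmat, A0, A1, A2, A3, Matrix.of_apply]
  ring

noncomputable def Mp : Matrix (Fin N₂ × Fin N₃) (Fin N₂ × Fin N₃) (MvPolynomial (Fin 2) ℂ) :=
  Matrix.of fun r c =>
    C (A0 N₂ N₃ u w κ r c) + C (A1 N₂ N₃ u w κ r c) * X 0
      + C (A2 N₂ N₃ u w κ r c) * X 1 + C (A3 N₂ N₃ u w κ r c) * (X 0 * X 1)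

lemma hmap (f : Fin 2 → ℂ) :
    (Mp N₂ N₃ u w κ).map (MvPolynomial.eval f) = Mmat N₂ N₃ u w κ (f 0) (f 1) := by
  ext r c
  simp [Mp, Mmat, Matrix.map_apply]

lemma hQeval (f : Fin 2 → ℂ) :
    MvPolynomial.eval f (Mp N₂ N₃ u w κ).det
      = (Mmat N₂ N₃ u w κ (f 0) (f 1)).det := by
  rw [RingHom.map_det, RingHom.mapMatrix_apply, hmap]

lemma deg_full_0 (p q r s : ℂ) :
    degreeOf 0 (C p + C q * X 0 + C r * X 1 + C s * (X 0 * X 1) : MvPolynomial (Fin 2) ℂ) ≤ 1 := by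
  have h0 : degreeOf 0 (X 0 : MvPolynomial (Fin 2) ℂ) ≤ 1 := by simp [degreeOf_X]
  have h1 : degreeOf 0 (X 1 : MvPolynomial (Fin 2) ℂ) ≤ 0 := by simp [degreeOf_X]
  refine le_trans (degreeOf_add_le _ _ _) (max_le (le_trans (degreeOf_add_le _ _ _)
    (max_le (le_trans (degreeOf_add_le _ _ _) (max_le ?_ ?_)) ?_)) ?_)
  · simp
  · exact (degreeOf_C_mul_le _ _ _).trans h0
  · exact (degreeOf_C_mul_le _ _ _).trans (h1.trans (by norm_num))
  · exact (degreeOf_C_mul_le _ _ _).trans ((degreeOf_mul_le _ _ _).trans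
      (by simpa using add_le_add h0 h1))

lemma deg_full_1 (p q r s : ℂ) :
    degreeOf 1 (C p + C q * X 0 + C r * X 1 + C s * (X 0 * X 1) : MvPolynomial (Fin 2) ℂ) ≤ 1 := by
  have h0 : degreeOf 1 (X 0 : MvPolynomial (Fin 2) ℂ) ≤ 0 := by simp [degreeOf_X]
  have h1 : degreeOf 1 (X 1 : MvPolynomial (Fin 2) ℂ) ≤ 1 := by simp [degreeOf_X]
  refine le_trans (degreeOf_add_le _ _ _) (max_le (le_trans (degreeOf_add_le _ _ _)
    (max_le (le_trans (degreeOf_add_le _ _ _) (max_le ?_ ?_)) ?_)) ?_)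
  · simp
  · exact (degreeOf_C_mul_le _ _ _).trans (h0.trans (by norm_num))
  · exact (degreeOf_C_mul_le _ _ _).trans h1
  · exact (degreeOf_C_mul_le _ _ _).trans ((degreeOf_mul_le _ _ _).trans
      (by simpa using add_le_add h0 h1))

lemma degMp0 (r c : Fin N₂ × Fin N₃) :
    degreeOf 0 (Mp N₂ N₃ u w κ r c) ≤ if (r.1 : ℕ) = 0 then 1 else 0 := by
  by_cases h : (r.1 : ℕ) = 0
  · rw [if_pos h]
    simp only [Mp, Matrix.of_apply]
    exact deg_full_0 _ _ _ _
  · rw [if_neg h]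
    have h1 : A1 N₂ N₃ u w κ r c = 0 := by simp [A1, h]
    have h3 : A3 N₂ N₃ u w κ r c = 0 := by simp [A3, h]
    simp only [Mp, Matrix.of_apply, h1, h3, map_zero, zero_mul, add_zero]
    refine le_trans (degreeOf_add_le _ _ _) (max_le (by simp)
      ((degreeOf_C_mul_le _ _ _).trans (by simp [degreeOf_X])))

lemma degMp1 (r c : Fin N₂ × Fin N₃) :
    degreeOf 1 (Mp N₂ N₃ u w κ r c) ≤ if (r.2 : ℕ) + 1 = N₃ then 1 else 0 := by
  by_cases h : (r.2 : ℕ) + 1 = N₃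
  · rw [if_pos h]
    simp only [Mp, Matrix.of_apply]
    exact deg_full_1 _ _ _ _
  · rw [if_neg h]
    have h2 : A2 N₂ N₃ u w κ r c = 0 := by simp [A2, h]
    have h3 : A3 N₂ N₃ u w κ r c = 0 := by simp [A3, h]
    simp only [Mp, Matrix.of_apply, h2, h3, map_zero, zero_mul, add_zero]
    refine le_trans (degreeOf_add_le _ _ _) (max_le (by simp)
      ((degreeOf_C_mul_le _ _ _).trans (by simp [degreeOf_X])))

lemma count0 (hN₂ : 1 ≤ N₂) :
    (∑ r : Fin N₂ × Fin N₃, if (r.1 : ℕ) = 0 then 1 else 0) = N₃ := by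
  rw [Fintype.sum_prod_type]
  have h : ∀ a : Fin N₂, ((a : ℕ) = 0) ↔ a = ⟨0, hN₂⟩ := fun a => by simp [Fin.ext_iff]
  simp_rw [h]
  simp [Finset.sum_ite_eq']

lemma count1 (hN₃ : 1 ≤ N₃) :
    (∑ r : Fin N₂ × Fin N₃, if (r.2 : ℕ) + 1 = N₃ then 1 else 0) = N₂ := by
  rw [Fintype.sum_prod_type]
  have h : ∀ b : Fin N₃, ((b : ℕ) + 1 = N₃) ↔ b = ⟨N₃ - 1, by omega⟩ := fun b => by
    have := b.isLt
    simp only [Fin.ext_iff]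
    omega
  simp_rw [h]
  simp [Finset.sum_ite_eq']

lemma deg_det_0 (hN₂ : 1 ≤ N₂) : degreeOf 0 (Mp N₂ N₃ u w κ).det ≤ N₃ := by
  rw [Matrix.det_apply']
  refine (degreeOf_sum_le _ _ _).trans (Finset.sup_le fun σ _ => ?_)
  refine (degreeOf_mul_le _ _ _).trans ?_
  have hc : degreeOf 0 (((Equiv.Perm.sign σ : ℤ) : MvPolynomial (Fin 2) ℂ)) = 0 := by
    rw [← map_intCast (C : ℂ →+* MvPolynomial (Fin 2) ℂ)]
    exact degreeOf_C _ _
  rw [hc, zero_add]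
  refine (degreeOf_prod_le _ _ _).trans ?_
  calc ∑ i : Fin N₂ × Fin N₃, degreeOf 0 (Mp N₂ N₃ u w κ (σ i) i)
      ≤ ∑ i : Fin N₂ × Fin N₃, (if ((σ i).1 : ℕ) = 0 then 1 else 0) :=
        Finset.sum_le_sum fun i _ => degMp0 N₂ N₃ u w κ (σ i) i
    _ = ∑ r : Fin N₂ × Fin N₃, (if (r.1 : ℕ) = 0 then 1 else 0) :=
        Equiv.sum_comp σ (fun r : Fin N₂ × Fin N₃ => if (r.1 : ℕ) = 0 then 1 else 0)
    _ = N₃ := count0 N₂ N₃ hN₂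

lemma deg_det_1 (hN₃ : 1 ≤ N₃) : degreeOf 1 (Mp N₂ N₃ u w κ).det ≤ N₂ := by
  rw [Matrix.det_apply']
  refine (degreeOf_sum_le _ _ _).trans (Finset.sup_le fun σ _ => ?_)
  refine (degreeOf_mul_le _ _ _).trans ?_
  have hc : degreeOf 1 (((Equiv.Perm.sign σ : ℤ) : MvPolynomial (Fin 2) ℂ)) = 0 := by
    rw [← map_intCast (C : ℂ →+* MvPolynomial (Fin 2) ℂ)]
    exact degreeOf_C _ _
  rw [hc, zero_add]
  refine (degreeOf_prod_le _ _ _).trans ?_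
  calc ∑ i : Fin N₂ × Fin N₃, degreeOf 1 (Mp N₂ N₃ u w κ (σ i) i)
      ≤ ∑ i : Fin N₂ × Fin N₃, (if ((σ i).2 : ℕ) + 1 = N₃ then 1 else 0) :=
        Finset.sum_le_sum fun i _ => degMp1 N₂ N₃ u w κ (σ i) i
    _ = ∑ r : Fin N₂ × Fin N₃, (if (r.2 : ℕ) + 1 = N₃ then 1 else 0) :=
        Equiv.sum_comp σ (fun r : Fin N₂ × Fin N₃ => if (r.2 : ℕ) + 1 = N₃ then 1 else 0)
    _ = N₂ := count1 N₂ N₃ hN₃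

lemma diag_one (r : Fin N₂ × Fin N₃) : Mmat N₂ N₃ u w κ 0 0 r r = 1 := by
  have hr1 := r.1.isLt
  have hr2 := r.2.isLt
  have hx : ¬((r.2 : ℕ) = (r.2 : ℕ) + 1) := by omega
  have hy : ¬((r.1 : ℕ) = (r.1 : ℕ) + 1) := by omega
  by_cases h3 : (r.2 : ℕ) + 1 = N₃
  · have me3 : ((r.2 : ℕ) + 1) % N₃ = 0 := by rw [h3]; exact Nat.mod_self _
    have hz : ¬((r.2 : ℕ) = 0 ∧ ¬((r.2 : ℕ) + 1 = N₃)) := by tauto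
    by_cases h2 : (r.1 : ℕ) + 1 = N₂
    · have me2 : ((r.1 : ℕ) + 1) % N₂ = 0 := by rw [h2]; exact Nat.mod_self _
      simp [Mmat, A0, me3, me2, h3, h2, hx, hy]
    · have me2 : ((r.1 : ℕ) + 1) % N₂ = (r.1 : ℕ) + 1 := Nat.mod_eq_of_lt (by omega)
      simp [Mmat, A0, me3, me2, h3, h2, hx, hy]
  · have me3 : ((r.2 : ℕ) + 1) % N₃ = (r.2 : ℕ) + 1 := Nat.mod_eq_of_lt (by omega)
    by_cases h2 : (r.1 : ℕ) + 1 = N₂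
    · have me2 : ((r.1 : ℕ) + 1) % N₂ = 0 := by rw [h2]; exact Nat.mod_self _
      simp [Mmat, A0, me3, me2, h3, h2, hx, hy]
    · have me2 : ((r.1 : ℕ) + 1) % N₂ = (r.1 : ℕ) + 1 := Nat.mod_eq_of_lt (by omega)
      simp [Mmat, A0, me3, me2, h3, h2, hx, hy]

lemma tri (r c : Fin N₂ × Fin N₃)
    (hlt : (N₃ - ((r.2 : ℕ) + 1)) + N₃ * (r.1 : ℕ)
      < (N₃ - ((c.2 : ℕ) + 1)) + N₃ * (c.1 : ℕ)) :
    Mmat N₂ N₃ u w κ 0 0 r c = 0 := by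
  have hr1 := r.1.isLt
  have hr2 := r.2.isLt
  have hc1 := c.1.isLt
  have hc2 := c.2.isLt
  have hn1 : ¬(c = r) := by
    intro h
    have h2 : (c.2 : ℕ) = (r.2 : ℕ) := by rw [h]
    have hp : N₃ * (c.1 : ℕ) = N₃ * (r.1 : ℕ) := by rw [h]
    omega
  have hn2 : ¬((c.1 = r.1 ∧ (c.2 : ℕ) = ((r.2 : ℕ) + 1) % N₃) ∧ ¬((r.2 : ℕ) + 1 = N₃)) := by
    rintro ⟨⟨h1, h2⟩, h3⟩
    have hp : N₃ * (c.1 : ℕ) = N₃ * (r.1 : ℕ) := by rw [h1]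
    have me3 : ((r.2 : ℕ) + 1) % N₃ = (r.2 : ℕ) + 1 := Nat.mod_eq_of_lt (by omega)
    rw [me3] at h2
    omega
  have hn3 : ¬(((r.1 : ℕ) = ((c.1 : ℕ) + 1) % N₂ ∧ c.2 = r.2) ∧ ¬((r.1 : ℕ) = 0)) := by
    rintro ⟨⟨h1, h2⟩, h3⟩
    have h2' : (c.2 : ℕ) = (r.2 : ℕ) := by rw [h2]
    by_cases hb : (c.1 : ℕ) + 1 = N₂
    · have me2 : ((c.1 : ℕ) + 1) % N₂ = 0 := by rw [hb]; exact Nat.mod_self _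
      rw [me2] at h1
      omega
    · have me2 : ((c.1 : ℕ) + 1) % N₂ = (c.1 : ℕ) + 1 := Nat.mod_eq_of_lt (by omega)
      rw [me2] at h1
      have hp : N₃ * (r.1 : ℕ) = N₃ * (c.1 : ℕ) + N₃ := by rw [h1]; ring
      omega
  have hn4 : ¬(((r.1 : ℕ) = ((c.1 : ℕ) + 1) % N₂ ∧ (c.2 : ℕ) = ((r.2 : ℕ) + 1) % N₃)
      ∧ ¬((r.1 : ℕ) = 0) ∧ ¬((r.2 : ℕ) + 1 = N₃)) := by
    rintro ⟨⟨h1, h2⟩, h3, h4⟩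
    have me3 : ((r.2 : ℕ) + 1) % N₃ = (r.2 : ℕ) + 1 := Nat.mod_eq_of_lt (by omega)
    rw [me3] at h2
    by_cases hb : (c.1 : ℕ) + 1 = N₂
    · have me2 : ((c.1 : ℕ) + 1) % N₂ = 0 := by rw [hb]; exact Nat.mod_self _
      rw [me2] at h1
      omega
    · have me2 : ((c.1 : ℕ) + 1) % N₂ = (c.1 : ℕ) + 1 := Nat.mod_eq_of_lt (by omega)
      rw [me2] at h1
      have hp : N₃ * (r.1 : ℕ) = N₃ * (c.1 : ℕ) + N₃ := by rw [h1]; ring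
      omega
  simp only [Mmat, Matrix.of_apply, mul_zero, add_zero, A0]
  rw [if_neg hn1, if_neg hn2, if_neg hn3, if_neg hn4]
  norm_num

lemma det_M00 : (Mmat N₂ N₃ u w κ 0 0).det = 1 := by
  classical
  let e : (Fin N₂ × Fin N₃) ≃ Fin (N₂ * N₃) :=
    (Equiv.prodCongr (Equiv.refl (Fin N₂)) Fin.revPerm).trans finProdFinEquiv
  have hkey : ∀ p : Fin N₂ × Fin N₃,
      (e p : ℕ) = (N₃ - ((p.2 : ℕ) + 1)) + N₃ * (p.1 : ℕ) := by
    intro p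
    simp [e, Fin.val_rev]
  have hbt : ((Mmat N₂ N₃ u w κ 0 0).submatrix e.symm e.symm).BlockTriangular
      OrderDual.toDual := by
    intro i j hij
    have hij' : i < j := hij
    simp only [Matrix.submatrix_apply]
    apply tri
    have h1 := hkey (e.symm i)
    have h2 := hkey (e.symm j)
    rw [← h1, ← h2, Equiv.apply_symm_apply, Equiv.apply_symm_apply]
    exact hij'
  rw [← Matrix.det_submatrix_equiv_self e.symm, Matrix.det_of_lowerTriangular _ hbt]
  refine Finset.prod_eq_one fun i _ => ?_
  simp only [Matrix.submatrix_apply]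
  exact diag_one N₂ N₃ u w κ _

end Stmt11


/-- Structure of the spectral determinant: the determinant
of the matrix `L(y,z)` of the quasi-periodic linear system on the `N₂ × N₃`
auxiliary lattice is a Laurent polynomial
`det L(y,z) = Σ_{a=0}^{N₃} Σ_{b=0}^{N₂} J_{a,b} y^{−a} z^{b}` whose
coefficients `J_{a,b}` do not depend on the spectral parameters `y, z`, with
normalization `J_{0,0} = 1`.

The matrix `L(y,z)` has rows indexed by the equations `j_{n₂,n₃}` and columns
by the unknowns `Φ_{n₂,n₃}`; row `(n₂,n₃)` has entry `1` on the diagonal,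
entry `−u_{n₂,n₃}` in column `(n₂, n₃+1 mod N₃)` (multiplied by `z` when the
shift wraps around), entry `w_{n₂,n₃}` in column `(n₂−1 mod N₂, n₃)`
(multiplied by `y⁻¹` when the shift wraps around), and entry
`κ_{n₂,n₃} u_{n₂,n₃} w_{n₂,n₃}` in column `(n₂−1 mod N₂, n₃+1 mod N₃)` (with
both wrap factors); coinciding columns accumulate their contributions. -/
theorem statement11 (N₂ N₃ : ℕ) (hN₂ : 1 ≤ N₂) (hN₃ : 1 ≤ N₃)
    (u w κ : Fin N₂ → Fin N₃ → ℂ)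
    (L : ℂ → ℂ → Matrix (Fin N₂ × Fin N₃) (Fin N₂ × Fin N₃) ℂ)
    (hL : ∀ (y z : ℂ) (r c : Fin N₂ × Fin N₃),
      L y z r c =
        (if c = r then (1 : ℂ) else 0)
        + (if c.1 = r.1 ∧ (c.2 : ℕ) = ((r.2 : ℕ) + 1) % N₃ then
            -(u r.1 r.2) * (if (r.2 : ℕ) + 1 = N₃ then z else 1) else 0)
        + (if (r.1 : ℕ) = ((c.1 : ℕ) + 1) % N₂ ∧ c.2 = r.2 then
            w r.1 r.2 * (if (r.1 : ℕ) = 0 then y⁻¹ else 1) else 0)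
        + (if (r.1 : ℕ) = ((c.1 : ℕ) + 1) % N₂ ∧ (c.2 : ℕ) = ((r.2 : ℕ) + 1) % N₃ then
            κ r.1 r.2 * u r.1 r.2 * w r.1 r.2
              * (if (r.1 : ℕ) = 0 then y⁻¹ else 1)
              * (if (r.2 : ℕ) + 1 = N₃ then z else 1) else 0)) :
    ∃ J : ℕ → ℕ → ℂ, J 0 0 = 1 ∧
      ∀ y z : ℂ, y ≠ 0 →
        (L y z).det =
          ∑ a ∈ Finset.range (N₃ + 1), ∑ b ∈ Finset.range (N₂ + 1),
            J a b * (y⁻¹) ^ a * z ^ b := by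
  classical
  refine ⟨fun a b => MvPolynomial.coeff (Finsupp.single 0 a + Finsupp.single 1 b)
      (Stmt11.Mp N₂ N₃ u w κ).det, ?_, ?_⟩
  · have h0 : (Finsupp.single (0 : Fin 2) (0 : ℕ) + Finsupp.single (1 : Fin 2) (0 : ℕ)) = 0 := by
      simp
    have hc : MvPolynomial.coeff (0 : Fin 2 →₀ ℕ) (Stmt11.Mp N₂ N₃ u w κ).det
        = MvPolynomial.eval (fun _ => (0 : ℂ)) (Stmt11.Mp N₂ N₃ u w κ).det := by
      rw [MvPolynomial.eval_zero', MvPolynomial.constantCoeff_eq]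
    show MvPolynomial.coeff
        (Finsupp.single (0 : Fin 2) (0 : ℕ) + Finsupp.single (1 : Fin 2) (0 : ℕ))
        (Stmt11.Mp N₂ N₃ u w κ).det = 1
    rw [h0, hc, Stmt11.hQeval]
    exact Stmt11.det_M00 N₂ N₃ u w κ
  · intro y z hy
    have hLM : L y z = Stmt11.Mmat N₂ N₃ u w κ y⁻¹ z := by
      ext r c
      rw [hL]
      exact Stmt11.hsum N₂ N₃ u w κ y⁻¹ z r c
    have he : MvPolynomial.eval ![y⁻¹, z] (Stmt11.Mp N₂ N₃ u w κ).det
        = (L y z).det := by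
      rw [Stmt11.hQeval, hLM]
      simp
    rw [← he, MvPolynomial.eval_eq']
    have hdrep : ∀ d : Fin 2 →₀ ℕ,
        (Finsupp.single (0 : Fin 2) (d 0) + Finsupp.single (1 : Fin 2) (d 1)) = d := by
      intro d
      ext i
      fin_cases i <;> simp [Finsupp.single_apply]
    have hsupp : (Stmt11.Mp N₂ N₃ u w κ).det.support
        ⊆ (Finset.range (N₃ + 1) ×ˢ Finset.range (N₂ + 1)).image
            (fun p : ℕ × ℕ =>
              Finsupp.single (0 : Fin 2) p.1 + Finsupp.single (1 : Fin 2) p.2) := by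
      intro d hd
      refine Finset.mem_image.mpr ⟨(d 0, d 1), Finset.mem_product.mpr ⟨?_, ?_⟩, hdrep d⟩
      · exact Finset.mem_range.mpr (Nat.lt_succ_of_le
          ((MvPolynomial.monomial_le_degreeOf 0 hd).trans (Stmt11.deg_det_0 N₂ N₃ u w κ hN₂)))
      · exact Finset.mem_range.mpr (Nat.lt_succ_of_le
          ((MvPolynomial.monomial_le_degreeOf 1 hd).trans (Stmt11.deg_det_1 N₂ N₃ u w κ hN₃)))
    rw [Finset.sum_subset hsupp (fun d _ hd => by
      rw [MvPolynomial.notMem_support_iff.mp hd, zero_mul])]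
    have hinj : ∀ p ∈ Finset.range (N₃ + 1) ×ˢ Finset.range (N₂ + 1),
        ∀ q ∈ Finset.range (N₃ + 1) ×ˢ Finset.range (N₂ + 1),
        (fun p : ℕ × ℕ =>
          Finsupp.single (0 : Fin 2) p.1 + Finsupp.single (1 : Fin 2) p.2) p
          = (fun p : ℕ × ℕ =>
          Finsupp.single (0 : Fin 2) p.1 + Finsupp.single (1 : Fin 2) p.2) q → p = q := by
      intro p _ q _ h
      have h0 := congrArg (fun f : Fin 2 →₀ ℕ => f 0) h
      have h1 := congrArg (fun f : Fin 2 →₀ ℕ => f 1) h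
      simp only [Finsupp.add_apply, Finsupp.single_apply] at h0 h1
      norm_num at h0 h1
      exact Prod.ext h0 h1
    rw [Finset.sum_image hinj, Finset.sum_product]
    refine Finset.sum_congr rfl fun a _ => Finset.sum_congr rfl fun b _ => ?_
    have h0 : (Finsupp.single (0 : Fin 2) a + Finsupp.single (1 : Fin 2) b) 0 = a := by
      simp [Finsupp.single_apply]
    have h1 : (Finsupp.single (0 : Fin 2) a + Finsupp.single (1 : Fin 2) b) 1 = b := by
      simp [Finsupp.single_apply]
    rw [Fin.prod_univ_two, h0, h1]
    simp [mul_assoc]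
end
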